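/- arXiv:1301.4540 — 8 statements merged into one kernel-verified Lean document; each statement's English description precedes it below -/
import Mathlib

section
/- Let s : (0, 1/16] → ℝ be continuously differentiable, with |s(x)| ≤ C and |x·s'(x)| ≤ C for all x in (0,1/16]. Then for all x, y in (0,1/16] with x ≠ y, |(√y·s(x) − √x·s(y))/(√x − √y)| ≤ 3C. -/
open Real Set

lemma aux_anti (s s' : ℝ → ℝ) (a : ℝ)
    (hderiv : ∀ x ∈ Set.Ioc (0:ℝ) (1/16), HasDerivAt s (s' x) x)
    (hkey : ∀ z ∈ Set.Ioc (0:ℝ) (1/16), 2 * z * s' z ≤ s z + a)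
    {x y : ℝ} (hx : x ∈ Set.Ioc (0:ℝ) (1/16)) (hy : y ∈ Set.Ioc (0:ℝ) (1/16))
    (hxy : x ≤ y) :
    (s y + a) / Real.sqrt y ≤ (s x + a) / Real.sqrt x := by
  have hsub : Set.Icc x y ⊆ Set.Ioc (0:ℝ) (1/16) := fun z hz =>
    ⟨lt_of_lt_of_le hx.1 hz.1, le_trans hz.2 hy.2⟩
  have hF : ∀ z ∈ Set.Ioc (0:ℝ) (1/16),
      HasDerivAt (fun w => (s w + a) / Real.sqrt w)
        ((s' z * Real.sqrt z - (s z + a) * (1 / (2 * Real.sqrt z))) / (Real.sqrt z) ^ 2) z := by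
    intro z hz
    have hz0 : 0 < z := hz.1
    exact HasDerivAt.div ((hderiv z hz).add_const a) (Real.hasDerivAt_sqrt hz0.ne')
      (by positivity)
  have key : AntitoneOn (fun w => (s w + a) / Real.sqrt w) (Set.Icc x y) := by
    apply antitoneOn_of_deriv_nonpos (convex_Icc x y)
    · intro z hz
      exact ((hF z (hsub hz)).differentiableAt).continuousAt.continuousWithinAt
    · intro z hz
      rw [interior_Icc] at hz
      exact ((hF z (hsub (Set.Ioo_subset_Icc_self hz))).differentiableAt).differentiableWithinAt
    · intro z hz
      rw [interior_Icc] at hz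
      have hzm := hsub (Set.Ioo_subset_Icc_self hz)
      have hz0 : 0 < z := hzm.1
      have hsq : 0 < Real.sqrt z := Real.sqrt_pos.2 hz0
      rw [(hF z hzm).deriv]
      apply div_nonpos_of_nonpos_of_nonneg _ (by positivity)
      rw [sub_nonpos, mul_one_div, le_div_iff₀ (by positivity)]
      have hm : Real.sqrt z * Real.sqrt z = z := Real.mul_self_sqrt hz0.le
      have hr : s' z * Real.sqrt z * (2 * Real.sqrt z) = 2 * z * s' z := by
        linear_combination 2 * s' z * hm
      rw [hr]; exact hkey z hzm
  exact key ⟨le_refl x, hxy⟩ ⟨hxy, le_refl y⟩ hxy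

lemma aux_num (s s' : ℝ → ℝ) (C : ℝ)
    (hderiv : ∀ x ∈ Set.Ioc (0:ℝ) (1/16), HasDerivAt s (s' x) x)
    (hs : ∀ x ∈ Set.Ioc (0:ℝ) (1/16), |s x| ≤ C)
    (hs' : ∀ x ∈ Set.Ioc (0:ℝ) (1/16), |x * s' x| ≤ C)
    {x y : ℝ} (hx : x ∈ Set.Ioc (0:ℝ) (1/16)) (hy : y ∈ Set.Ioc (0:ℝ) (1/16))
    (hxy : x < y) :
    |Real.sqrt y * s x - Real.sqrt x * s y| ≤ 3 * C * (Real.sqrt y - Real.sqrt x) := by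
  have h1 := aux_anti s s' (3 * C) hderiv (fun z hz => by
    have h1 := abs_le.1 (hs z hz)
    have h2 := abs_le.1 (hs' z hz)
    linarith) hx hy hxy.le
  have h2 := aux_anti (fun w => -s w) (fun w => -s' w) (3 * C)
    (fun z hz => (hderiv z hz).neg)
    (fun z hz => by
      have h1 := abs_le.1 (hs z hz)
      have h2 := abs_le.1 (hs' z hz)
      linarith) hx hy hxy.le
  have hxs : (0:ℝ) < Real.sqrt x := Real.sqrt_pos.2 hx.1
  have hys : (0:ℝ) < Real.sqrt y := Real.sqrt_pos.2 hy.1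
  rw [div_le_div_iff₀ hys hxs] at h1 h2
  rw [abs_le]
  constructor <;> nlinarith

theorem stmt_1 (s s' : ℝ → ℝ) (C : ℝ)
    (hderiv : ∀ x ∈ Set.Ioc (0:ℝ) (1/16), HasDerivAt s (s' x) x)
    (hcont : ContinuousOn s' (Set.Ioc (0:ℝ) (1/16)))
    (hs : ∀ x ∈ Set.Ioc (0:ℝ) (1/16), |s x| ≤ C)
    (hs' : ∀ x ∈ Set.Ioc (0:ℝ) (1/16), |x * s' x| ≤ C) :
    ∀ x ∈ Set.Ioc (0:ℝ) (1/16), ∀ y ∈ Set.Ioc (0:ℝ) (1/16), x ≠ y →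
      |(Real.sqrt y * s x - Real.sqrt x * s y) / (Real.sqrt x - Real.sqrt y)| ≤ 3 * C := by
  have main : ∀ x ∈ Set.Ioc (0:ℝ) (1/16), ∀ y ∈ Set.Ioc (0:ℝ) (1/16), x < y →
      |(Real.sqrt y * s x - Real.sqrt x * s y) / (Real.sqrt x - Real.sqrt y)| ≤ 3 * C := by
    intro x hx y hy hxy
    have hss : Real.sqrt x < Real.sqrt y := Real.sqrt_lt_sqrt hx.1.le hxy
    rw [abs_div, div_le_iff₀ (by rwa [abs_sub_comm, abs_of_pos (by linarith), sub_pos])]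
    rw [abs_sub_comm (Real.sqrt x), abs_of_pos (by linarith : (0:ℝ) < Real.sqrt y - Real.sqrt x)]
    exact aux_num s s' C hderiv hs hs' hx hy hxy
  intro x hx y hy hne
  rcases hne.lt_or_gt with h | h
  · exact main x hx y hy h
  · have heq : (Real.sqrt y * s x - Real.sqrt x * s y) / (Real.sqrt x - Real.sqrt y)
        = (Real.sqrt x * s y - Real.sqrt y * s x) / (Real.sqrt y - Real.sqrt x) := by
      rw [← neg_div_neg_eq, neg_sub, neg_sub]
    rw [heq]
    exact main y hy x hx h
end

section
/- The function s(x) = (sin(ln x))/16 defined on (0, 1/16] satisfies: |s(x)| ≤ 1/16 and |x·s'(x)| ≤ 1/16 for all x ∈ (0,1/16], yet s(x) does not converge as x → 0⁺. -/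
open Real Set Filter Topology

theorem stmt_4 :
    (∀ x ∈ Set.Ioc (0:ℝ) (1/16),
        |Real.sin (Real.log x) / 16| ≤ 1/16 ∧
        |x * deriv (fun t => Real.sin (Real.log t) / 16) x| ≤ 1/16) ∧
    ¬ ∃ L : ℝ, Filter.Tendsto (fun x => Real.sin (Real.log x) / 16)
        (nhdsWithin 0 (Set.Ioi 0)) (nhds L) := by
  constructor
  · intro x hx
    have hx0 : (0:ℝ) < x := hx.1
    constructor
    · rw [abs_div]
      have := Real.abs_sin_le_one (Real.log x)
      simp only [abs_of_nonneg (by norm_num : (0:ℝ) ≤ 16)] at *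
      linarith
    · have hd : HasDerivAt (fun t => Real.sin (Real.log t) / 16)
          (Real.cos (Real.log x) * x⁻¹ / 16) x := by
        exact ((Real.hasDerivAt_log hx0.ne').sin).div_const 16
      rw [hd.deriv]
      have : x * (Real.cos (Real.log x) * x⁻¹ / 16) = Real.cos (Real.log x) / 16 := by
        field_simp
      rw [this, abs_div]
      have := Real.abs_cos_le_one (Real.log x)
      simp only [abs_of_nonneg (by norm_num : (0:ℝ) ≤ 16)] at *
      linarith
  · rintro ⟨L, hL⟩
    -- sequences
    have hexp : ∀ c : ℝ, Filter.Tendsto (fun n : ℕ => Real.exp (c - 2 * Real.pi * n))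
        Filter.atTop (nhdsWithin 0 (Set.Ioi 0)) := by
      intro c
      apply tendsto_nhdsWithin_of_tendsto_nhds_of_eventually_within
      · have hb : Filter.Tendsto (fun n : ℕ => 2 * Real.pi * (n:ℝ)) Filter.atTop Filter.atTop :=
          Filter.Tendsto.const_mul_atTop (by positivity) tendsto_natCast_atTop_atTop
        have : Filter.Tendsto (fun n : ℕ => c - 2 * Real.pi * n) Filter.atTop Filter.atBot := by
          simpa [sub_eq_add_neg] using
            Filter.tendsto_atBot_add_const_left Filter.atTop c
              (Filter.tendsto_neg_atBot_iff.mpr hb)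
        exact Real.tendsto_exp_atBot.comp this
      · exact Filter.Eventually.of_forall fun n => Real.exp_pos _
    have h1 := hL.comp (hexp (Real.pi / 2))
    have h2 := hL.comp (hexp (-(Real.pi / 2)))
    have e1 : (fun n : ℕ => Real.sin (Real.log (Real.exp (Real.pi/2 - 2*Real.pi*n))) / 16)
        = fun _ => (1:ℝ)/16 := by
      funext n
      rw [Real.log_exp]
      rw [show Real.pi/2 - 2*Real.pi*n = Real.pi/2 - (n:ℕ) * (2*Real.pi) by ring,
        Real.sin_sub_nat_mul_two_pi, Real.sin_pi_div_two]
    have e2 : (fun n : ℕ => Real.sin (Real.log (Real.exp (-(Real.pi/2) - 2*Real.pi*n))) / 16)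
        = fun _ => (-1:ℝ)/16 := by
      funext n
      rw [Real.log_exp]
      rw [show -(Real.pi/2) - 2*Real.pi*n = -(Real.pi/2) - (n:ℕ) * (2*Real.pi) by ring,
        Real.sin_sub_nat_mul_two_pi, Real.sin_neg, Real.sin_pi_div_two]
    simp only [Function.comp_def] at h1 h2
    rw [e1] at h1
    rw [e2] at h2
    have l1 : L = 1/16 := tendsto_nhds_unique h1 tendsto_const_nhds
    have l2 : L = -1/16 := tendsto_nhds_unique h2 tendsto_const_nhds
    rw [l1] at l2
    norm_num at l2
end

section
/- The function s(x) = sin(ln(−ln x))/16 on (0, 1/16] satisfies |s(x)| ≤ 1/16, |x·s'(x)| ≤ 1/(64·ln 2) < 1/16, and x·s'(x) → 0 as x → 0⁺, but s(x) does not converge as x → 0⁺. -/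
open Real Set Filter Topology

private lemma hderiv5 {x : ℝ} (hx0 : 0 < x) (hx1 : x < 1) :
    HasDerivAt (fun t => Real.sin (Real.log (-Real.log t)) / 16)
      (Real.cos (Real.log (-Real.log x)) * (-x⁻¹ / -Real.log x) / 16) x := by
  have hlx : Real.log x < 0 := Real.log_neg hx0 hx1
  have h1 : HasDerivAt (fun t : ℝ => -Real.log t) (-x⁻¹) x :=
    (Real.hasDerivAt_log hx0.ne').neg
  have h2 : HasDerivAt (fun t : ℝ => Real.log (-Real.log t)) (-x⁻¹ / -Real.log x) x :=
    h1.log (by simpa using hlx.ne)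
  exact h2.sin.div_const 16

private lemma key5 {x : ℝ} (hx0 : 0 < x) (hx1 : x < 1) :
    x * deriv (fun t => Real.sin (Real.log (-Real.log t)) / 16) x
      = Real.cos (Real.log (-Real.log x)) / (16 * Real.log x) := by
  have hlx : Real.log x < 0 := Real.log_neg hx0 hx1
  rw [(hderiv5 hx0 hx1).deriv, eq_div_iff (mul_ne_zero (by norm_num) hlx.ne)]
  field_simp [hx0.ne', hlx.ne]

private lemma seq5 {c L : ℝ} (hLt : Filter.Tendsto
      (fun x => Real.sin (Real.log (-Real.log x)) / 16)
      (nhdsWithin 0 (Set.Ioi 0)) (nhds L)) :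
    L = Real.sin c / 16 := by
  set u : ℕ → ℝ := fun n => Real.exp (-(Real.exp (c + n * (2 * Real.pi))))
  have hu : Filter.Tendsto u atTop (nhdsWithin 0 (Set.Ioi 0)) := by
    rw [tendsto_nhdsWithin_iff]
    constructor
    · apply Real.tendsto_exp_atBot.comp
      apply Filter.tendsto_neg_atBot_iff.mpr
      apply Real.tendsto_exp_atTop.comp
      apply Filter.tendsto_atTop_add_const_left
      apply Filter.Tendsto.atTop_mul_const (by positivity)
      exact tendsto_natCast_atTop_atTop
    · exact Filter.Eventually.of_forall fun n => Real.exp_pos _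
  have h := hLt.comp hu
  have h2 : Filter.Tendsto (fun _ : ℕ => Real.sin c / 16) atTop (nhds L) := by
    refine h.congr fun n => ?_
    simp only [u, Function.comp, Real.log_exp, neg_neg, Real.sin_add_nat_mul_two_pi]
  exact tendsto_nhds_unique h2 tendsto_const_nhds

theorem stmt_5 :
    (∀ x ∈ Set.Ioc (0:ℝ) (1/16),
        |Real.sin (Real.log (-Real.log x)) / 16| ≤ 1/16 ∧
        |x * deriv (fun t => Real.sin (Real.log (-Real.log t)) / 16) x| ≤
          1 / (64 * Real.log 2)) ∧
    (1 / (64 * Real.log 2) : ℝ) < 1/16 ∧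
    Filter.Tendsto (fun x => x * deriv (fun t => Real.sin (Real.log (-Real.log t)) / 16) x)
      (nhdsWithin 0 (Set.Ioi 0)) (nhds 0) ∧
    ¬ ∃ L : ℝ, Filter.Tendsto (fun x => Real.sin (Real.log (-Real.log x)) / 16)
        (nhdsWithin 0 (Set.Ioi 0)) (nhds L) := by
  have hlog2 : (0.6931471803 : ℝ) < Real.log 2 := Real.log_two_gt_d9
  have hev1 : ∀ᶠ x in nhdsWithin (0:ℝ) (Set.Ioi 0), x ∈ Set.Ioo (0:ℝ) 1 := by
    filter_upwards [self_mem_nhdsWithin,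
      eventually_nhdsWithin_of_eventually_nhds
        (Filter.Tendsto.eventually_lt_const (by norm_num : (0:ℝ) < 1) tendsto_id)] with x hx hx1
    exact ⟨hx, hx1⟩
  refine ⟨?_, ?_, ?_, ?_⟩
  · rintro x ⟨hx0, hx16⟩
    have hx1 : x < 1 := lt_of_le_of_lt hx16 (by norm_num)
    constructor
    · rw [abs_div, abs_of_pos (by norm_num : (0:ℝ) < 16)]
      have := Real.abs_sin_le_one (Real.log (-Real.log x))
      linarith
    · rw [key5 hx0 hx1]
      have hlx : Real.log x ≤ -(4 * Real.log 2) := by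
        calc Real.log x ≤ Real.log (1/16) := Real.log_le_log hx0 hx16
          _ = -(4 * Real.log 2) := by
            rw [show (1/16 : ℝ) = (2:ℝ)^(-4 : ℤ) by norm_num]
            rw [Real.log_zpow]; push_cast; ring
      rw [abs_div, abs_mul, abs_of_pos (by norm_num : (0:ℝ) < 16),
        abs_of_neg (by linarith : Real.log x < 0)]
      apply div_le_div₀ (by positivity) (Real.abs_cos_le_one _) (by linarith) (by nlinarith)
  · rw [div_lt_div_iff₀ (by linarith) (by norm_num)]
    linarith
  · have hev : ∀ᶠ x in nhdsWithin (0:ℝ) (Set.Ioi 0),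
        Real.cos (Real.log (-Real.log x)) / (16 * Real.log x)
          = x * deriv (fun t => Real.sin (Real.log (-Real.log t)) / 16) x := by
      filter_upwards [hev1] with x hx
      exact (key5 hx.1 hx.2).symm
    have htend : Filter.Tendsto (fun x : ℝ => (16 * Real.log x)⁻¹)
        (nhdsWithin 0 (Set.Ioi 0)) (nhds 0) := by
      have hB : Filter.Tendsto (fun x : ℝ => 16 * Real.log x)
          (nhdsWithin 0 (Set.Ioi 0)) atBot :=
        Filter.Tendsto.const_mul_atBot (by norm_num)
          Real.tendsto_log_nhdsGT_zero
      have hA : Filter.Tendsto (fun x : ℝ => -(16 * Real.log x))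
          (nhdsWithin 0 (Set.Ioi 0)) atTop := by
        exact tendsto_neg_atBot_iff.mp (by simpa using hB)
      have h0 := hA.inv_tendsto_atTop
      have h1 := h0.neg
      rw [neg_zero] at h1
      refine h1.congr fun x => ?_
      show -(-(16 * Real.log x))⁻¹ = (16 * Real.log x)⁻¹
      rw [inv_neg, neg_neg]
    have htend2 : Filter.Tendsto (fun x : ℝ => |(16 * Real.log x)⁻¹|)
        (nhdsWithin 0 (Set.Ioi 0)) (nhds 0) := by
      have := htend.abs
      simpa using this
    refine Filter.Tendsto.congr' hev (squeeze_zero_norm' ?_ htend2)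
    filter_upwards [hev1] with x hx
    have hlx : Real.log x < 0 := Real.log_neg hx.1 hx.2
    have hpos : 0 < |16 * Real.log x| := abs_pos.mpr (mul_ne_zero (by norm_num) hlx.ne)
    rw [Real.norm_eq_abs, abs_div, abs_inv, ← one_div]
    exact div_le_div₀ zero_le_one (Real.abs_cos_le_one _) hpos le_rfl
  · rintro ⟨L, hLt⟩
    have h1 := seq5 (c := Real.pi / 2) hLt
    have h2 := seq5 (c := -(Real.pi / 2)) hLt
    rw [Real.sin_pi_div_two] at h1
    rw [Real.sin_neg, Real.sin_pi_div_two] at h2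
    rw [h1] at h2
    norm_num at h2
end

section
/- Let s be C¹ on (0,1/16] with |s| ≤ 1/16 and |x·s'(x)| ≤ 1/16, and let f₁, f₂ be defined as before (difference quotients with diagonal values 2xs'(x)±s(x)). Define p⁺*(x,y) = √(xy)·[(1−√x)(1−√y) − f₁(x,y) + √(xy)·f₂(x,y)] / [(1−x)(1−y)(1+f₂(x,y))] for xy > 0 and p⁺*(x,y) = 0 if xy = 0. Then p⁺* is well defined (the denominator is nonzero), jointly continuous on [0,1/16]², and takes values in [0, 1/2]. -/
/-!
With `g u = u s(u²)`, `f₁ x y` is the divided difference of `g` at `(√x, √y)` and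
`f₂ x y = f₁ x y - s x - s y`. By the mean value theorem `|f₁| ≤ sup |g'| ≤ 3/16`, so
`|f₂| ≤ 5/16`, and `f₁` is continuous also across the diagonal, where the mean value point is
squeezed between the two arguments. These bounds put the numerator of `p⁺*` between `0` and
three times its denominator, which is at least `2475/4096`; hence `0 ≤ p⁺* ≤ 3 √(xy) ≤ 3/16`,
and the bound `3 √(xy)` also gives continuity at the axes, where `p⁺* = 0`.
-/

open Real Set Filter Topology

noncomputable def divDiff (g g' : ℝ → ℝ) (u v : ℝ) : ℝ :=
  if u = v then g' u else (g u - g v) / (u - v)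

section DivDiff

variable {g g' : ℝ → ℝ} {I : Set ℝ}

theorem divDiff_comm (u v : ℝ) : divDiff g g' u v = divDiff g g' v u := by
  unfold divDiff
  split_ifs with h h' h'
  · rw [h]
  · exact absurd h.symm h'
  · exact absurd h'.symm h
  · rw [← neg_sub v u, ← neg_sub (g v), neg_div_neg_eq]

theorem exists_divDiff_eq (hI : I.OrdConnected) (hg : ∀ u ∈ I, HasDerivAt g (g' u) u)
    {u v : ℝ} (hu : u ∈ I) (hv : v ∈ I) : ∃ ξ ∈ uIcc u v, divDiff g g' u v = g' ξ := by
  wlog huv : u ≤ v generalizing u v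
  · obtain ⟨ξ, hξ, h⟩ := this hv hu (le_of_not_ge huv)
    exact ⟨ξ, uIcc_comm u v ▸ hξ, divDiff_comm u v ▸ h⟩
  rcases huv.eq_or_lt with rfl | huv
  · exact ⟨u, left_mem_uIcc, if_pos rfl⟩
  have hIcc : Icc u v ⊆ I := hI.out hu hv
  obtain ⟨ξ, hξ, h⟩ := exists_hasDerivAt_eq_slope g g' huv
    (fun x hx => (hg x (hIcc hx)).continuousAt.continuousWithinAt)
    (fun x hx => hg x (hIcc (Ioo_subset_Icc_self hx)))
  refine ⟨ξ, Icc_subset_uIcc (Ioo_subset_Icc_self hξ), ?_⟩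
  rw [h, divDiff_comm, divDiff, if_neg huv.ne']

theorem abs_divDiff_le (hI : I.OrdConnected) (hg : ∀ u ∈ I, HasDerivAt g (g' u) u) {M : ℝ}
    (hM : ∀ u ∈ I, |g' u| ≤ M) {u v : ℝ} (hu : u ∈ I) (hv : v ∈ I) :
    |divDiff g g' u v| ≤ M := by
  obtain ⟨ξ, hξ, h⟩ := exists_divDiff_eq hI hg hu hv
  exact h ▸ hM ξ (hI.uIcc_subset hu hv hξ)

theorem continuousOn_divDiff (hI : I.OrdConnected) (hg : ∀ u ∈ I, HasDerivAt g (g' u) u)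
    (hg' : ContinuousOn g' I) :
    ContinuousOn (fun q : ℝ × ℝ => divDiff g g' q.1 q.2) (I ×ˢ I) := by
  rintro ⟨u, v⟩ ⟨hu, hv⟩
  rcases eq_or_ne u v with rfl | huv
  · choose! ξ hξ hξeq using fun q (hq : q ∈ I ×ˢ I) => exists_divDiff_eq hI hg hq.1 hq.2
    have hξu : Tendsto ξ (𝓝[I ×ˢ I] (u, u)) (𝓝[I] u) := by
      refine tendsto_nhdsWithin_iff.2 ⟨?_, eventually_nhdsWithin_of_forall fun q hq =>
        hI.uIcc_subset hq.1 hq.2 (hξ q hq)⟩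
      have hmin : Tendsto (fun q : ℝ × ℝ => q.1 ⊓ q.2) (𝓝[I ×ˢ I] (u, u)) (𝓝 u) := by
        simpa only [min_self] using
          ((continuous_fst.min continuous_snd).tendsto (u, u)).mono_left nhdsWithin_le_nhds
      have hmax : Tendsto (fun q : ℝ × ℝ => q.1 ⊔ q.2) (𝓝[I ×ˢ I] (u, u)) (𝓝 u) := by
        simpa only [max_self] using
          ((continuous_fst.max continuous_snd).tendsto (u, u)).mono_left nhdsWithin_le_nhds
      exact tendsto_of_tendsto_of_tendsto_of_le_of_le' hmin hmax
        (eventually_nhdsWithin_of_forall fun q hq => (hξ q hq).1)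
        (eventually_nhdsWithin_of_forall fun q hq => (hξ q hq).2)
    have := (hg' u hu).tendsto.comp hξu
    rw [ContinuousWithinAt, divDiff, if_pos rfl]
    exact this.congr' (eventually_nhdsWithin_of_forall fun q hq => (hξeq q hq).symm)
  · have hgc : ContinuousOn g I := fun x hx => (hg x hx).continuousAt.continuousWithinAt
    have hquot : ContinuousWithinAt (fun q : ℝ × ℝ => (g q.1 - g q.2) / (q.1 - q.2))
        (I ×ˢ I) (u, v) :=
      (((hgc u hu).comp continuousWithinAt_fst fun q hq => hq.1).sub
        ((hgc v hv).comp continuousWithinAt_snd fun q hq => hq.2)).div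
        (continuous_fst.sub continuous_snd).continuousWithinAt (sub_ne_zero.2 huv)
    refine hquot.congr_of_eventuallyEq ?_ (if_neg huv)
    have hoff : {q : ℝ × ℝ | q.1 ≠ q.2} ∈ 𝓝 (u, v) :=
      (isOpen_ne_fun continuous_fst continuous_snd).mem_nhds huv
    filter_upwards [nhdsWithin_le_nhds hoff] with q hq using if_neg hq

end DivDiff

section SqrtSubstitution

variable {a : ℝ} {s s' : ℝ → ℝ} {f₁ f₂ : ℝ → ℝ → ℝ}

theorem mapsTo_sq_Ioc : MapsTo (· ^ 2) (Ioc (0:ℝ) (1/4)) (Ioc 0 (1/16)) := fun u hu =>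
  ⟨pow_pos hu.1 2, by nlinarith [hu.1, hu.2]⟩

theorem mapsTo_sqrt_Ioc : MapsTo sqrt (Ioc (0:ℝ) (1/16)) (Ioc 0 (1/4)) := fun x hx =>
  ⟨sqrt_pos.2 hx.1, (sqrt_le_left (by norm_num)).2 (by linarith [hx.2])⟩

theorem hasDerivAt_mul_comp_sq {u : ℝ} (h : HasDerivAt s (s' (u ^ 2)) (u ^ 2)) :
    HasDerivAt (fun u => u * s (u ^ 2)) (s (u ^ 2) + 2 * u ^ 2 * s' (u ^ 2)) u := by
  have hsq : HasDerivAt (fun u : ℝ => u ^ 2) (2 * u) u := by simpa using hasDerivAt_pow 2 u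
  exact ((hasDerivAt_id u).mul (HasDerivAt.comp (h := (· ^ 2)) u h hsq)).congr_deriv (by
    simp only [id, Function.comp_apply]
    ring)

theorem divDiff_sqrt {x y : ℝ} (hx : 0 ≤ x) (hy : 0 ≤ y) :
    divDiff (fun u => u * s (u ^ 2)) (fun u => s (u ^ 2) + 2 * u ^ 2 * s' (u ^ 2)) √x √y =
      if x = y then 2 * x * s' x + s x else (√x * s x - √y * s y) / (√x - √y) := by
  simp only [divDiff, sqrt_inj hx hy, sq_sqrt hx, sq_sqrt hy]
  split_ifs <;> ring

theorem abs_divDiff_sqrt_le (hderiv : ∀ x ∈ Ioc (0:ℝ) (1/16), HasDerivAt s (s' x) x)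
    (hs : ∀ x ∈ Ioc (0:ℝ) (1/16), |s x| ≤ 1/16)
    (hs' : ∀ x ∈ Ioc (0:ℝ) (1/16), |x * s' x| ≤ 1/16)
    {x y : ℝ} (hx : x ∈ Ioc (0:ℝ) (1/16)) (hy : y ∈ Ioc (0:ℝ) (1/16)) :
    |divDiff (fun u => u * s (u ^ 2)) (fun u => s (u ^ 2) + 2 * u ^ 2 * s' (u ^ 2)) √x √y|
      ≤ 3/16 := by
  refine abs_divDiff_le ordConnected_Ioc
    (fun u hu => hasDerivAt_mul_comp_sq (hderiv _ (mapsTo_sq_Ioc hu))) (fun u hu => ?_)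
    (mapsTo_sqrt_Ioc hx) (mapsTo_sqrt_Ioc hy)
  have h₀ := abs_le.1 (hs _ (mapsTo_sq_Ioc hu))
  have h₁ := abs_le.1 (hs' _ (mapsTo_sq_Ioc hu))
  exact abs_le.2 ⟨by linarith, by linarith⟩

theorem continuousOn_divDiff_sqrt (hderiv : ∀ x ∈ Ioc (0:ℝ) (1/16), HasDerivAt s (s' x) x)
    (hcont : ContinuousOn s' (Ioc (0:ℝ) (1/16))) :
    ContinuousOn (fun q : ℝ × ℝ => divDiff (fun u => u * s (u ^ 2))
      (fun u => s (u ^ 2) + 2 * u ^ 2 * s' (u ^ 2)) √q.1 √q.2)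
      (Ioc (0:ℝ) (1/16) ×ˢ Ioc (0:ℝ) (1/16)) := by
  have hscont : ContinuousOn s (Ioc (0:ℝ) (1/16)) := fun x hx =>
    (hderiv x hx).continuousAt.continuousWithinAt
  have hg'cont : ContinuousOn (fun u => s (u ^ 2) + 2 * u ^ 2 * s' (u ^ 2)) (Ioc 0 (1/4)) :=
    (hscont.comp (continuousOn_pow 2) mapsTo_sq_Ioc).add
      ((continuousOn_const.mul (continuousOn_pow 2)).mul
        (hcont.comp (continuousOn_pow 2) mapsTo_sq_Ioc))
  exact (continuousOn_divDiff ordConnected_Ioc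
    (fun u hu => hasDerivAt_mul_comp_sq (hderiv _ (mapsTo_sq_Ioc hu))) hg'cont).comp
    (f := fun q : ℝ × ℝ => (√q.1, √q.2)) (by fun_prop)
    fun q hq => ⟨mapsTo_sqrt_Ioc hq.1, mapsTo_sqrt_Ioc hq.2⟩

theorem eq_divDiff_sqrt
    (hf₁ : ∀ x ∈ Ioc 0 a, ∀ y ∈ Ioc 0 a, x ≠ y →
      f₁ x y = (√x * s x - √y * s y) / (√x - √y))
    (hf₁diag : ∀ x ∈ Ioc 0 a, f₁ x x = 2 * x * s' x + s x)
    {x y : ℝ} (hx : x ∈ Ioc 0 a) (hy : y ∈ Ioc 0 a) :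
    f₁ x y =
      divDiff (fun u => u * s (u ^ 2)) (fun u => s (u ^ 2) + 2 * u ^ 2 * s' (u ^ 2)) √x √y := by
  rw [divDiff_sqrt hx.1.le hy.1.le]
  split_ifs with hxy
  · exact hxy ▸ hf₁diag x hx
  · exact hf₁ x hx y hy hxy

theorem eq_sub_sub_of_sqrt_div_sub
    (hf₁ : ∀ x ∈ Ioc 0 a, ∀ y ∈ Ioc 0 a, x ≠ y →
      f₁ x y = (√x * s x - √y * s y) / (√x - √y))
    (hf₁diag : ∀ x ∈ Ioc 0 a, f₁ x x = 2 * x * s' x + s x)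
    (hf₂ : ∀ x ∈ Ioc 0 a, ∀ y ∈ Ioc 0 a, x ≠ y →
      f₂ x y = (√y * s x - √x * s y) / (√x - √y))
    (hf₂diag : ∀ x ∈ Ioc 0 a, f₂ x x = 2 * x * s' x - s x)
    {x y : ℝ} (hx : x ∈ Ioc 0 a) (hy : y ∈ Ioc 0 a) :
    f₂ x y = f₁ x y - s x - s y := by
  rcases eq_or_ne x y with rfl | hxy
  · rw [hf₂diag x hx, hf₁diag x hx]
    ring
  · have : √x - √y ≠ 0 := sub_ne_zero.2 fun h => hxy ((sqrt_inj hx.1.le hy.1.le).1 h)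
    rw [hf₂ x hx y hy hxy, hf₁ x hx y hy hxy]
    field_simp
    ring

end SqrtSubstitution

theorem mem_Ioc_of_mem_Icc_of_mul_pos {a x y : ℝ} (hx : x ∈ Icc 0 a) (hy : y ∈ Icc 0 a)
    (hxy : 0 < x * y) : x ∈ Ioc 0 a ∧ y ∈ Ioc 0 a :=
  ⟨⟨pos_of_mul_pos_left hxy hy.1, hx.2⟩, ⟨pos_of_mul_pos_right hxy hx.1, hy.2⟩⟩

theorem continuousOn_of_eqOn_of_abs_le_mul_sqrt {P F : ℝ × ℝ → ℝ} {a C : ℝ}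
    (hF : ContinuousOn F (Ioc 0 a ×ˢ Ioc 0 a)) (hPF : EqOn P F (Ioc 0 a ×ˢ Ioc 0 a))
    (hP : ∀ q ∈ Icc 0 a ×ˢ Icc 0 a, |P q| ≤ C * √(q.1 * q.2)) :
    ContinuousOn P (Icc 0 a ×ˢ Icc 0 a) := by
  rintro ⟨x, y⟩ hq
  rcases (mul_nonneg hq.1.1 hq.2.1).eq_or_lt with hxy | hxy
  · have hP0 : P (x, y) = 0 := abs_nonpos_iff.1 (by simpa [← hxy] using hP _ hq)
    have hbound :
        Tendsto (fun q : ℝ × ℝ => C * √(q.1 * q.2)) (𝓝[Icc 0 a ×ˢ Icc 0 a] (x, y)) (𝓝 0) := by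
      have := ((by fun_prop : Continuous fun q : ℝ × ℝ => C * √(q.1 * q.2)).tendsto
        (x, y)).mono_left (nhdsWithin_le_nhds (s := Icc 0 a ×ˢ Icc 0 a))
      rwa [← hxy, sqrt_zero, mul_zero] at this
    rw [ContinuousWithinAt, hP0]
    exact squeeze_zero_norm' (eventually_nhdsWithin_of_forall hP) hbound
  · obtain ⟨hx, hy⟩ := mem_Ioc_of_mem_Icc_of_mul_pos hq.1 hq.2 hxy
    have hT : Ioc 0 a ×ˢ Ioc 0 a ∈ 𝓝[Icc 0 a ×ˢ Icc 0 a] (x, y) :=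
      mem_nhdsWithin.2 ⟨Ioi 0 ×ˢ Ioi 0, isOpen_Ioi.prod isOpen_Ioi, ⟨hx.1, hy.1⟩,
        fun q ⟨⟨h₁, h₂⟩, h₃, h₄⟩ => ⟨⟨h₁, h₃.2⟩, h₂, h₄.2⟩⟩
    exact ((hF _ ⟨hx, hy⟩).congr (fun q hq => hPF hq) (hPF ⟨hx, hy⟩)).mono_of_mem_nhdsWithin
      hT

theorem sqrt_mul_div_mem_Icc {x y a b : ℝ} (hx : x ∈ Ioc (0:ℝ) (1/16))
    (hy : y ∈ Ioc (0:ℝ) (1/16)) (ha : |a| ≤ 3/16) (hb : |b| ≤ 5/16) :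
    √(x*y) * ((1 - √x) * (1 - √y) - a + √(x*y) * b) / ((1 - x) * (1 - y) * (1 + b))
      ∈ Icc 0 (3 * √(x*y)) := by
  obtain ⟨hx₀, hx₁⟩ := mapsTo_sqrt_Ioc hx
  obtain ⟨hy₀, hy₁⟩ := mapsTo_sqrt_Ioc hy
  obtain ⟨ha₀, ha₁⟩ := abs_le.1 ha
  obtain ⟨hb₀, hb₁⟩ := abs_le.1 hb
  rw [sqrt_mul hx.1.le, mul_div_assoc]
  have hxy : √x * √y ≤ 1/16 := by nlinarith
  have hbxy : |√x * √y * b| ≤ 1/16 * (5/16) := by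
    rw [abs_mul, abs_of_pos (mul_pos hx₀ hy₀)]
    exact mul_le_mul hxy hb (abs_nonneg _) (by norm_num)
  have hN : 0 ≤ (1 - √x) * (1 - √y) - a + √x * √y * b := by
    nlinarith [(abs_le.1 hbxy).1, mul_nonneg (sub_nonneg.2 hx₁) (sub_nonneg.2 hy₁)]
  have hD : 2475/4096 ≤ (1 - x) * (1 - y) * (1 + b) := by
    have h₁ : 15/16 * (15/16) ≤ (1 - x) * (1 - y) :=
      mul_le_mul (by linarith [hx.2]) (by linarith [hy.2]) (by norm_num) (by linarith [hx.2])
    nlinarith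
  have hND :
      (1 - √x) * (1 - √y) - a + √x * √y * b ≤ 3 * ((1 - x) * (1 - y) * (1 + b)) := by
    nlinarith [(abs_le.1 hbxy).2, mul_pos hx₀ hy₀]
  have hpos := mul_pos hx₀ hy₀
  refine ⟨mul_nonneg hpos.le (div_nonneg hN (by linarith)), ?_⟩
  rw [mul_comm 3]
  exact mul_le_mul_of_nonneg_left ((div_le_iff₀ (by linarith)).2 hND) hpos.le

theorem pstar_ne_zero_and_continuousOn_and_mem_Icc {f₁ f₂ pstar : ℝ → ℝ → ℝ}
    (hf₁ : ∀ x ∈ Ioc (0:ℝ) (1/16), ∀ y ∈ Ioc (0:ℝ) (1/16), |f₁ x y| ≤ 3/16)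
    (hf₂ : ∀ x ∈ Ioc (0:ℝ) (1/16), ∀ y ∈ Ioc (0:ℝ) (1/16), |f₂ x y| ≤ 5/16)
    (hc₁ : ContinuousOn (fun q : ℝ × ℝ => f₁ q.1 q.2) (Ioc 0 (1/16) ×ˢ Ioc 0 (1/16)))
    (hc₂ : ContinuousOn (fun q : ℝ × ℝ => f₂ q.1 q.2) (Ioc 0 (1/16) ×ˢ Ioc 0 (1/16)))
    (hp : ∀ x ∈ Icc (0:ℝ) (1/16), ∀ y ∈ Icc (0:ℝ) (1/16), 0 < x * y →
      pstar x y = √(x*y) * ((1 - √x) * (1 - √y) - f₁ x y + √(x*y) * f₂ x y) /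
        ((1 - x) * (1 - y) * (1 + f₂ x y)))
    (hp0 : ∀ x ∈ Icc (0:ℝ) (1/16), ∀ y ∈ Icc (0:ℝ) (1/16), x * y = 0 → pstar x y = 0) :
    (∀ x ∈ Icc (0:ℝ) (1/16), ∀ y ∈ Icc (0:ℝ) (1/16), 0 < x * y →
        (1 - x) * (1 - y) * (1 + f₂ x y) ≠ 0) ∧
    ContinuousOn (fun p : ℝ × ℝ => pstar p.1 p.2)
      (Icc (0:ℝ) (1/16) ×ˢ Icc (0:ℝ) (1/16)) ∧
    (∀ x ∈ Icc (0:ℝ) (1/16), ∀ y ∈ Icc (0:ℝ) (1/16), pstar x y ∈ Icc (0:ℝ) (1/2)) := by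
  have hden : ∀ x ∈ Ioc (0:ℝ) (1/16), ∀ y ∈ Ioc (0:ℝ) (1/16),
      0 < (1 - x) * (1 - y) * (1 + f₂ x y) := fun x hx y hy =>
    mul_pos (mul_pos (by linarith [hx.2]) (by linarith [hy.2]))
      (by linarith [(abs_le.1 (hf₂ x hx y hy)).1])
  have hbound : ∀ q ∈ Icc (0:ℝ) (1/16) ×ˢ Icc (0:ℝ) (1/16),
      pstar q.1 q.2 ∈ Icc 0 (3 * √(q.1 * q.2)) := by
    rintro ⟨x, y⟩ ⟨hx, hy⟩
    rcases (mul_nonneg hx.1 hy.1).eq_or_lt with hxy | hxy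
    · simp [hp0 x hx y hy hxy.symm, ← hxy]
    · obtain ⟨hx', hy'⟩ := mem_Ioc_of_mem_Icc_of_mul_pos hx hy hxy
      rw [hp x hx y hy hxy]
      exact sqrt_mul_div_mem_Icc hx' hy' (hf₁ x hx' y hy') (hf₂ x hx' y hy')
  refine ⟨fun x hx y hy hxy => ?_, ?_, fun x hx y hy => ?_⟩
  · obtain ⟨hx', hy'⟩ := mem_Ioc_of_mem_Icc_of_mul_pos hx hy hxy
    exact (hden x hx' y hy').ne'
  · refine continuousOn_of_eqOn_of_abs_le_mul_sqrt (C := 3) ?_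
      (fun q hq => hp q.1 ⟨hq.1.1.le, hq.1.2⟩ q.2 ⟨hq.2.1.le, hq.2.2⟩ (mul_pos hq.1.1 hq.2.1))
      fun q hq => abs_le.2 ⟨by linarith [(hbound q hq).1, sqrt_nonneg (q.1 * q.2)],
        (hbound q hq).2⟩
    exact ContinuousOn.div (by fun_prop) (by fun_prop) fun q hq => (hden _ hq.1 _ hq.2).ne'
  · obtain ⟨h₀, h₃⟩ := hbound (x, y) ⟨hx, hy⟩
    have : x * y ≤ (1/16) ^ 2 := by nlinarith [hx.1, hx.2, hy.1, hy.2]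
    exact ⟨h₀, h₃.trans (by linarith [(sqrt_le_left (by norm_num)).2 this])⟩

theorem stmt_6 (s s' : ℝ → ℝ)
    (hderiv : ∀ x ∈ Set.Ioc (0:ℝ) (1/16), HasDerivAt s (s' x) x)
    (hcont : ContinuousOn s' (Set.Ioc (0:ℝ) (1/16)))
    (hs : ∀ x ∈ Set.Ioc (0:ℝ) (1/16), |s x| ≤ 1/16)
    (hs' : ∀ x ∈ Set.Ioc (0:ℝ) (1/16), |x * s' x| ≤ 1/16)
    (f₁ f₂ : ℝ → ℝ → ℝ)
    (hf₁ : ∀ x ∈ Set.Ioc (0:ℝ) (1/16), ∀ y ∈ Set.Ioc (0:ℝ) (1/16), x ≠ y →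
      f₁ x y = (Real.sqrt x * s x - Real.sqrt y * s y) / (Real.sqrt x - Real.sqrt y))
    (hf₁diag : ∀ x ∈ Set.Ioc (0:ℝ) (1/16), f₁ x x = 2 * x * s' x + s x)
    (hf₂ : ∀ x ∈ Set.Ioc (0:ℝ) (1/16), ∀ y ∈ Set.Ioc (0:ℝ) (1/16), x ≠ y →
      f₂ x y = (Real.sqrt y * s x - Real.sqrt x * s y) / (Real.sqrt x - Real.sqrt y))
    (hf₂diag : ∀ x ∈ Set.Ioc (0:ℝ) (1/16), f₂ x x = 2 * x * s' x - s x)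
    (pstar : ℝ → ℝ → ℝ)
    (hp : ∀ x ∈ Set.Icc (0:ℝ) (1/16), ∀ y ∈ Set.Icc (0:ℝ) (1/16), 0 < x * y →
      pstar x y = Real.sqrt (x*y) *
          ((1 - Real.sqrt x) * (1 - Real.sqrt y) - f₁ x y + Real.sqrt (x*y) * f₂ x y) /
        ((1 - x) * (1 - y) * (1 + f₂ x y)))
    (hp0 : ∀ x ∈ Set.Icc (0:ℝ) (1/16), ∀ y ∈ Set.Icc (0:ℝ) (1/16), x * y = 0 →
      pstar x y = 0) :
    (∀ x ∈ Set.Icc (0:ℝ) (1/16), ∀ y ∈ Set.Icc (0:ℝ) (1/16), 0 < x * y →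
        (1 - x) * (1 - y) * (1 + f₂ x y) ≠ 0) ∧
    ContinuousOn (fun p : ℝ × ℝ => pstar p.1 p.2)
      (Set.Icc (0:ℝ) (1/16) ×ˢ Set.Icc (0:ℝ) (1/16)) ∧
    (∀ x ∈ Set.Icc (0:ℝ) (1/16), ∀ y ∈ Set.Icc (0:ℝ) (1/16),
        pstar x y ∈ Set.Icc (0:ℝ) (1/2)) := by
  have hf₁_eq : ∀ x ∈ Ioc (0:ℝ) (1/16), ∀ y ∈ Ioc (0:ℝ) (1/16), f₁ x y = divDiff
      (fun u => u * s (u ^ 2)) (fun u => s (u ^ 2) + 2 * u ^ 2 * s' (u ^ 2)) √x √y :=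
    fun x hx y hy => eq_divDiff_sqrt hf₁ hf₁diag hx hy
  have hf₂_eq :
      ∀ x ∈ Ioc (0:ℝ) (1/16), ∀ y ∈ Ioc (0:ℝ) (1/16), f₂ x y = f₁ x y - s x - s y :=
    fun x hx y hy => eq_sub_sub_of_sqrt_div_sub hf₁ hf₁diag hf₂ hf₂diag hx hy
  have hf₁_le : ∀ x ∈ Ioc (0:ℝ) (1/16), ∀ y ∈ Ioc (0:ℝ) (1/16), |f₁ x y| ≤ 3/16 :=
    fun x hx y hy => hf₁_eq x hx y hy ▸ abs_divDiff_sqrt_le hderiv hs hs' hx hy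
  have hc₁ : ContinuousOn (fun q : ℝ × ℝ => f₁ q.1 q.2) (Ioc 0 (1/16) ×ˢ Ioc 0 (1/16)) :=
    (continuousOn_divDiff_sqrt hderiv hcont).congr fun q hq => hf₁_eq _ hq.1 _ hq.2
  have hscont : ContinuousOn s (Ioc (0:ℝ) (1/16)) := fun x hx =>
    (hderiv x hx).continuousAt.continuousWithinAt
  refine pstar_ne_zero_and_continuousOn_and_mem_Icc hf₁_le (fun x hx y hy => ?_) hc₁ ?_ hp
    hp0
  · have := abs_le.1 (hf₁_le x hx y hy)
    have := abs_le.1 (hs x hx)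
    have := abs_le.1 (hs y hy)
    exact hf₂_eq x hx y hy ▸ abs_le.2 ⟨by linarith, by linarith⟩
  · exact ((hc₁.sub (hscont.comp continuousOn_fst fun q hq => hq.1)).sub
      (hscont.comp continuousOn_snd fun q hq => hq.2)).congr
      fun q hq => hf₂_eq _ hq.1 _ hq.2
end

section
/- Under the same hypotheses on s, f₁, f₂, the function p₊(x,y) = (√x+√y)(1−√x−s(x))(1−√y−s(y)) / [2(1−x)(1−y)(1+f₂(x,y))] for xy > 0, extended by p₊(x,0) = √x(1−√x−s(x))/(2(1−x)), p₊(0,y) = √y(1−√y−s(y))/(2(1−y)), and p₊(0,0) = 0, is well defined, jointly continuous on [0,1/16]², and takes values in [0,1/2]. -/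
open Real Set

/-!
With `u = √x`, `g(u) = 1 - u - s(u²)` and `r(u) = u / g(u)`, a direct computation gives
`1 + f₂(x, y) = g(√x) g(√y) · D(√x, √y)`, where `D` is the divided difference of `r`
(equal to `r'` on the diagonal). Hence `p₊(x, y) = (√x + √y) / (2(1 - x)(1 - y) D(√x, √y))`.
Since `r' = (1 - s(u²) + 2u² s'(u²)) / g(u)² ≥ 208/289`, the mean value theorem gives
`D ≥ 208/289`, so `0 ≤ p₊ ≤ (2312/2925)(√x + √y) ≤ 1/2`. The mean value theorem also shows
that `D` is jointly continuous on the diagonal, because `r'` is continuous; at the origin the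
bound squeezes `p₊` to `0`.
-/

open Filter Topology

theorem exists_mem_uIcc_dslope_eq {f f' : ℝ → ℝ} {s : Set ℝ} (hs : s.OrdConnected)
    (hf : ∀ x ∈ s, HasDerivAt f (f' x) x) {x y : ℝ} (hx : x ∈ s) (hy : y ∈ s) :
    ∃ ξ ∈ s ∩ uIcc x y, dslope f x y = f' ξ := by
  have mvt : ∀ a ∈ s, ∀ b ∈ s, a < b → ∃ ξ ∈ s ∩ Icc a b, slope f a b = f' ξ := by
    intro a ha b hb hab
    obtain ⟨ξ, hξ, hslope⟩ := exists_hasDerivAt_eq_slope f f' hab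
      (fun z hz => (hf z (hs.out ha hb hz)).continuousAt.continuousWithinAt)
      (fun z hz => hf z (hs.out ha hb (Ioo_subset_Icc_self hz)))
    exact ⟨ξ, ⟨hs.out ha hb (Ioo_subset_Icc_self hξ), Ioo_subset_Icc_self hξ⟩,
      by rw [slope_def_field, hslope]⟩
  rcases lt_trichotomy x y with hxy | rfl | hxy
  · obtain ⟨ξ, ⟨hξs, hξ⟩, hslope⟩ := mvt x hx y hy hxy
    exact ⟨ξ, ⟨hξs, Icc_subset_uIcc hξ⟩, by rw [dslope_of_ne f hxy.ne', hslope]⟩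
  · exact ⟨x, ⟨hx, left_mem_uIcc⟩, by rw [dslope_same, (hf x hx).deriv]⟩
  · obtain ⟨ξ, ⟨hξs, hξ⟩, hslope⟩ := mvt y hy x hx hxy
    exact ⟨ξ, ⟨hξs, Icc_subset_uIcc' hξ⟩, by rw [dslope_of_ne f hxy.ne, slope_comm, hslope]⟩

theorem continuousWithinAt_dslope_diag {f f' : ℝ → ℝ} {s : Set ℝ} {a : ℝ} (hs : s.OrdConnected)
    (hf : ∀ x ∈ s, HasDerivAt f (f' x) x) (ha : a ∈ s) (hf' : ContinuousWithinAt f' s a) :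
    ContinuousWithinAt (fun p : ℝ × ℝ => dslope f p.1 p.2) (s ×ˢ s) (a, a) := by
  rw [Metric.continuousWithinAt_iff] at hf' ⊢
  intro ε hε
  obtain ⟨δ, hδ, hclose⟩ := hf' ε hε
  refine ⟨δ, hδ, fun {p} hp hpa => ?_⟩
  rw [Prod.dist_eq, max_lt_iff] at hpa
  obtain ⟨ξ, ⟨hξs, hξ⟩, hslope⟩ := exists_mem_uIcc_dslope_eq hs hf hp.1 hp.2
  have hξa : ξ ∈ Metric.ball a δ :=
    (convex_ball a δ).ordConnected.uIcc_subset hpa.1 hpa.2 hξ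
  simp only [dslope_same, (hf a ha).deriv, hslope]
  exact hclose hξs hξa

namespace PPlus

variable {s s' : ℝ → ℝ}

/-- The paper's `1 - √x - s x`, written in the variable `u = √x`. -/
noncomputable def gap (s : ℝ → ℝ) (u : ℝ) : ℝ := 1 - u - s (u ^ 2)

noncomputable def ratio (s : ℝ → ℝ) (u : ℝ) : ℝ := u / gap s u

noncomputable def ratioDeriv (s s' : ℝ → ℝ) (u : ℝ) : ℝ :=
  (1 - s (u ^ 2) + 2 * u ^ 2 * s' (u ^ 2)) / gap s u ^ 2

/-- `p₊` in the variables `u = √x`, `v = √y`. At `(0, 0)` the divided difference is the junk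
value `deriv (ratio s) 0`, which is harmless because the numerator vanishes there. -/
noncomputable def ofSqrt (s : ℝ → ℝ) (u v : ℝ) : ℝ :=
  (u + v) / (2 * (1 - u ^ 2) * (1 - v ^ 2) * dslope (ratio s) u v)

theorem sq_mem_Ioc {u : ℝ} (hu : u ∈ Ioc (0:ℝ) (1/4)) : u ^ 2 ∈ Ioc (0:ℝ) (1/16) :=
  ⟨by have := hu.1; positivity, by nlinarith [hu.1, hu.2]⟩

theorem sqrt_mem_Icc {x : ℝ} (hx : x ∈ Icc (0:ℝ) (1/16)) : √x ∈ Icc (0:ℝ) (1/4) := by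
  refine ⟨sqrt_nonneg x, ?_⟩
  calc √x ≤ √((1/4) ^ 2) := sqrt_le_sqrt (by norm_num [hx.2])
    _ = 1/4 := sqrt_sq (by norm_num)

theorem sqrt_mem_Ioc {x : ℝ} (hx : x ∈ Ioc (0:ℝ) (1/16)) : √x ∈ Ioc (0:ℝ) (1/4) :=
  ⟨sqrt_pos.mpr hx.1, (sqrt_mem_Icc (Ioc_subset_Icc_self hx)).2⟩

theorem gap_sqrt (s : ℝ → ℝ) {x : ℝ} (hx : 0 ≤ x) : gap s √x = 1 - √x - s x := by
  rw [gap, sq_sqrt hx]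

theorem gap_mem_Icc (hs : ∀ x ∈ Ioc (0:ℝ) (1/16), |s x| ≤ 1/16) {u : ℝ}
    (hu : u ∈ Ioc (0:ℝ) (1/4)) : gap s u ∈ Icc (11/16) (17/16) := by
  obtain ⟨h₁, h₂⟩ := abs_le.mp (hs _ (sq_mem_Ioc hu))
  exact ⟨by unfold gap; linarith [hu.2], by unfold gap; linarith [hu.1]⟩

theorem gap_pos (hs : ∀ x ∈ Ioc (0:ℝ) (1/16), |s x| ≤ 1/16) {u : ℝ}
    (hu : u ∈ Ioc (0:ℝ) (1/4)) : 0 < gap s u :=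
  lt_of_lt_of_le (by norm_num) (gap_mem_Icc hs hu).1

theorem hasDerivAt_gap (hderiv : ∀ x ∈ Ioc (0:ℝ) (1/16), HasDerivAt s (s' x) x) {u : ℝ}
    (hu : u ∈ Ioc (0:ℝ) (1/4)) : HasDerivAt (gap s) (-1 - s' (u ^ 2) * (2 * u)) u := by
  have hsq : HasDerivAt (fun t : ℝ => t ^ 2) (2 * u) u := by
    simpa using hasDerivAt_pow 2 u
  exact ((hasDerivAt_id u).const_sub 1).sub
    (HasDerivAt.comp (h := fun t : ℝ => t ^ 2) u (hderiv _ (sq_mem_Ioc hu)) hsq)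

theorem hasDerivAt_ratio (hderiv : ∀ x ∈ Ioc (0:ℝ) (1/16), HasDerivAt s (s' x) x)
    (hs : ∀ x ∈ Ioc (0:ℝ) (1/16), |s x| ≤ 1/16) {u : ℝ} (hu : u ∈ Ioc (0:ℝ) (1/4)) :
    HasDerivAt (ratio s) (ratioDeriv s s' u) u := by
  have hg := (gap_pos hs hu).ne'
  have h : HasDerivAt (ratio s) ((1 * gap s u - u * (-1 - s' (u ^ 2) * (2 * u))) / gap s u ^ 2) u :=
    (hasDerivAt_id' u).div (hasDerivAt_gap hderiv hu) hg
  refine h.congr_deriv ?_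
  rw [ratioDeriv, gap]
  ring

theorem le_ratioDeriv (hs : ∀ x ∈ Ioc (0:ℝ) (1/16), |s x| ≤ 1/16)
    (hs' : ∀ x ∈ Ioc (0:ℝ) (1/16), |x * s' x| ≤ 1/16) {u : ℝ} (hu : u ∈ Ioc (0:ℝ) (1/4)) :
    208/289 ≤ ratioDeriv s s' u := by
  obtain ⟨-, hs₂⟩ := abs_le.mp (hs _ (sq_mem_Ioc hu))
  obtain ⟨hs'₁, -⟩ := abs_le.mp (hs' _ (sq_mem_Ioc hu))
  obtain ⟨hg₁, hg₂⟩ := gap_mem_Icc hs hu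
  have hg_sq : gap s u ^ 2 ≤ 289/256 := by nlinarith
  rw [ratioDeriv, le_div_iff₀ (pow_pos (gap_pos hs hu) 2)]
  linarith

theorem continuousOn_ratio (hderiv : ∀ x ∈ Ioc (0:ℝ) (1/16), HasDerivAt s (s' x) x)
    (hs : ∀ x ∈ Ioc (0:ℝ) (1/16), |s x| ≤ 1/16) : ContinuousOn (ratio s) (Icc 0 (1/4)) := by
  intro u hu
  rcases hu.1.eq_or_lt with rfl | hu₀
  · have hbound : ∀ᶠ v in 𝓝[Icc 0 (1/4)] 0, ‖ratio s v‖ ≤ 16/11 * v := by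
      filter_upwards [self_mem_nhdsWithin] with v hv
      rcases hv.1.eq_or_lt with rfl | hv₀
      · simp [ratio]
      · have hv' : v ∈ Ioc (0:ℝ) (1/4) := ⟨hv₀, hv.2⟩
        rw [ratio, norm_div, Real.norm_of_nonneg hv₀.le,
          Real.norm_of_nonneg (gap_pos hs hv').le, div_le_iff₀ (gap_pos hs hv')]
        nlinarith [(gap_mem_Icc hs hv').1]
    have hlim : Tendsto (fun v : ℝ => 16/11 * v) (𝓝[Icc 0 (1/4)] 0) (𝓝 0) := by
      simpa using ((continuous_const_mul (16/11 : ℝ)).tendsto 0).mono_left nhdsWithin_le_nhds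
    rw [ContinuousWithinAt, show ratio s 0 = 0 by simp [ratio]]
    exact squeeze_zero_norm' hbound hlim
  · exact (hasDerivAt_ratio hderiv hs ⟨hu₀, hu.2⟩).continuousAt.continuousWithinAt

theorem continuousOn_ratioDeriv (hderiv : ∀ x ∈ Ioc (0:ℝ) (1/16), HasDerivAt s (s' x) x)
    (hcont : ContinuousOn s' (Ioc (0:ℝ) (1/16))) (hs : ∀ x ∈ Ioc (0:ℝ) (1/16), |s x| ≤ 1/16) :
    ContinuousOn (ratioDeriv s s') (Ioc 0 (1/4)) := by
  have hsq : MapsTo (fun u : ℝ => u ^ 2) (Ioc 0 (1/4)) (Ioc 0 (1/16)) := fun u hu => sq_mem_Ioc hu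
  have hs_sq : ContinuousOn (fun u => s (u ^ 2)) (Ioc 0 (1/4)) :=
    (HasDerivAt.continuousOn fun x hx => hderiv x hx).comp (continuous_pow 2).continuousOn hsq
  have hs'_sq : ContinuousOn (fun u => s' (u ^ 2)) (Ioc 0 (1/4)) :=
    hcont.comp (continuous_pow 2).continuousOn hsq
  have hgap : ContinuousOn (gap s) (Ioc 0 (1/4)) :=
    HasDerivAt.continuousOn fun u hu => hasDerivAt_gap hderiv hu
  have hnum : ContinuousOn (fun u => 1 - s (u ^ 2) + 2 * u ^ 2 * s' (u ^ 2)) (Ioc 0 (1/4)) :=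
    (continuousOn_const.sub hs_sq).add
      ((continuous_const.mul (continuous_pow 2)).continuousOn.mul hs'_sq)
  exact hnum.div (hgap.pow 2) fun u hu => (pow_pos (gap_pos hs hu) 2).ne'

theorem le_dslope_ratio (hderiv : ∀ x ∈ Ioc (0:ℝ) (1/16), HasDerivAt s (s' x) x)
    (hs : ∀ x ∈ Ioc (0:ℝ) (1/16), |s x| ≤ 1/16) (hs' : ∀ x ∈ Ioc (0:ℝ) (1/16), |x * s' x| ≤ 1/16)
    {u v : ℝ} (hu : u ∈ Icc (0:ℝ) (1/4)) (hv : v ∈ Icc (0:ℝ) (1/4)) (huv : 0 < u + v) :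
    208/289 ≤ dslope (ratio s) u v := by
  rcases eq_or_ne v u with rfl | hne
  · have hv' : v ∈ Ioc (0:ℝ) (1/4) := ⟨by linarith, hv.2⟩
    rw [dslope_same, (hasDerivAt_ratio hderiv hs hv').deriv]
    exact le_ratioDeriv hs hs' hv'
  have hint : interior (Icc (0:ℝ) (1/4)) ⊆ Ioc 0 (1/4) := by
    rw [interior_Icc]; exact Ioo_subset_Ioc_self
  have hmono := (convex_Icc (0:ℝ) (1/4)).mul_sub_le_image_sub_of_le_deriv
    (continuousOn_ratio hderiv hs)
    (fun w hw => (hasDerivAt_ratio hderiv hs (hint hw)).differentiableAt.differentiableWithinAt)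
    (fun w hw => (hasDerivAt_ratio hderiv hs (hint hw)).deriv ▸ le_ratioDeriv hs hs' (hint hw))
  rw [dslope_of_ne _ hne]
  rcases hne.lt_or_gt with hvu | huv
  · rw [slope_comm, slope_def_field, le_div_iff₀ (sub_pos.mpr hvu)]
    exact hmono v hv u hu hvu.le
  · rw [slope_def_field, le_div_iff₀ (sub_pos.mpr huv)]
    exact hmono u hu v hv huv.le

theorem continuousWithinAt_dslope_ratio
    (hderiv : ∀ x ∈ Ioc (0:ℝ) (1/16), HasDerivAt s (s' x) x)
    (hcont : ContinuousOn s' (Ioc (0:ℝ) (1/16))) (hs : ∀ x ∈ Ioc (0:ℝ) (1/16), |s x| ≤ 1/16)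
    {u v : ℝ} (hu : u ∈ Icc (0:ℝ) (1/4)) (hv : v ∈ Icc (0:ℝ) (1/4)) (huv : 0 < u + v) :
    ContinuousWithinAt (fun p : ℝ × ℝ => dslope (ratio s) p.1 p.2)
      (Icc 0 (1/4) ×ˢ Icc 0 (1/4)) (u, v) := by
  rcases eq_or_ne u v with rfl | hne
  · have hu' : u ∈ Ioc (0:ℝ) (1/4) := ⟨by linarith, hu.2⟩
    have hnhds : Ioc (0:ℝ) (1/4) ×ˢ Ioc (0:ℝ) (1/4) ∈ 𝓝[Icc 0 (1/4) ×ˢ Icc 0 (1/4)] (u, u) :=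
      mem_nhdsWithin.mpr ⟨Ioi 0 ×ˢ Ioi 0, isOpen_Ioi.prod isOpen_Ioi, ⟨hu'.1, hu'.1⟩,
        fun p ⟨hp₀, hp⟩ => ⟨⟨hp₀.1, hp.1.2⟩, ⟨hp₀.2, hp.2.2⟩⟩⟩
    exact (continuousWithinAt_dslope_diag ordConnected_Ioc
      (fun w hw => hasDerivAt_ratio hderiv hs hw) hu'
      (continuousOn_ratioDeriv hderiv hcont hs u hu')).mono_of_mem_nhdsWithin hnhds
  · have hr := continuousOn_ratio hderiv hs
    have hslope : ContinuousWithinAt (fun p : ℝ × ℝ => (ratio s p.2 - ratio s p.1) / (p.2 - p.1))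
        (Icc 0 (1/4) ×ˢ Icc 0 (1/4)) (u, v) := by
      refine ContinuousWithinAt.div ?_ ?_ (sub_ne_zero.mpr hne.symm)
      · exact ((hr v hv).comp (x := (u, v)) continuousWithinAt_snd mapsTo_snd_prod).sub
          ((hr u hu).comp (x := (u, v)) continuousWithinAt_fst mapsTo_fst_prod)
      · exact continuousWithinAt_snd.sub continuousWithinAt_fst
    refine hslope.congr_of_eventuallyEq ?_ (by simp [dslope_of_ne _ hne.symm, slope_def_field])
    filter_upwards [mem_nhdsWithin_of_mem_nhds
      ((isOpen_ne_fun continuous_fst continuous_snd).mem_nhds hne)] with p hp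
    simp [dslope_of_ne _ (Ne.symm hp), slope_def_field]

theorem ofSqrt_nonneg (hderiv : ∀ x ∈ Ioc (0:ℝ) (1/16), HasDerivAt s (s' x) x)
    (hs : ∀ x ∈ Ioc (0:ℝ) (1/16), |s x| ≤ 1/16) (hs' : ∀ x ∈ Ioc (0:ℝ) (1/16), |x * s' x| ≤ 1/16)
    {u v : ℝ} (hu : u ∈ Icc (0:ℝ) (1/4)) (hv : v ∈ Icc (0:ℝ) (1/4)) : 0 ≤ ofSqrt s u v := by
  rcases (add_nonneg hu.1 hv.1).eq_or_lt with huv | huv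
  · simp [ofSqrt, ← huv]
  have hD := le_dslope_ratio hderiv hs hs' hu hv huv
  have hu₁ : 0 ≤ 1 - u ^ 2 := by nlinarith [hu.1, hu.2]
  have hv₁ : 0 ≤ 1 - v ^ 2 := by nlinarith [hv.1, hv.2]
  exact div_nonneg huv.le (mul_nonneg (by positivity) (by linarith))

theorem ofSqrt_le (hderiv : ∀ x ∈ Ioc (0:ℝ) (1/16), HasDerivAt s (s' x) x)
    (hs : ∀ x ∈ Ioc (0:ℝ) (1/16), |s x| ≤ 1/16) (hs' : ∀ x ∈ Ioc (0:ℝ) (1/16), |x * s' x| ≤ 1/16)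
    {u v : ℝ} (hu : u ∈ Icc (0:ℝ) (1/4)) (hv : v ∈ Icc (0:ℝ) (1/4)) :
    ofSqrt s u v ≤ 2312/2925 * (u + v) := by
  rcases (add_nonneg hu.1 hv.1).eq_or_lt with huv | huv
  · simp [ofSqrt, ← huv]
  have hD := le_dslope_ratio hderiv hs hs' hu hv huv
  have hA : 225/256 ≤ (1 - u ^ 2) * (1 - v ^ 2) := by
    nlinarith [mul_le_mul (show 15/16 ≤ 1 - u ^ 2 by nlinarith [hu.1, hu.2])
      (show 15/16 ≤ 1 - v ^ 2 by nlinarith [hv.1, hv.2]) (by norm_num) (by nlinarith [hu.1, hu.2])]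
  have hden : 2925/2312 ≤ 2 * (1 - u ^ 2) * (1 - v ^ 2) * dslope (ratio s) u v := by
    nlinarith [mul_le_mul hA hD (by norm_num) (by linarith)]
  rw [ofSqrt, div_le_iff₀ (by linarith)]
  nlinarith

theorem continuousOn_ofSqrt (hderiv : ∀ x ∈ Ioc (0:ℝ) (1/16), HasDerivAt s (s' x) x)
    (hcont : ContinuousOn s' (Ioc (0:ℝ) (1/16))) (hs : ∀ x ∈ Ioc (0:ℝ) (1/16), |s x| ≤ 1/16)
    (hs' : ∀ x ∈ Ioc (0:ℝ) (1/16), |x * s' x| ≤ 1/16) :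
    ContinuousOn (fun p : ℝ × ℝ => ofSqrt s p.1 p.2) (Icc 0 (1/4) ×ˢ Icc 0 (1/4)) := by
  rintro ⟨u, v⟩ ⟨hu, hv⟩
  rcases (add_nonneg hu.1 hv.1).eq_or_lt with huv | huv
  · obtain ⟨rfl, rfl⟩ : u = 0 ∧ v = 0 := ⟨by linarith [hu.1, hv.1], by linarith [hu.1, hv.1]⟩
    have hbound : ∀ᶠ p in 𝓝[Icc 0 (1/4) ×ˢ Icc 0 (1/4)] ((0:ℝ), (0:ℝ)),
        ‖ofSqrt s p.1 p.2‖ ≤ 2312/2925 * (p.1 + p.2) := by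
      filter_upwards [self_mem_nhdsWithin] with p hp
      rw [Real.norm_of_nonneg (ofSqrt_nonneg hderiv hs hs' hp.1 hp.2)]
      exact ofSqrt_le hderiv hs hs' hp.1 hp.2
    have hlim : Tendsto (fun p : ℝ × ℝ => 2312/2925 * (p.1 + p.2))
        (𝓝[Icc 0 (1/4) ×ˢ Icc 0 (1/4)] (0, 0)) (𝓝 0) := by
      simpa using ((by fun_prop : Continuous fun p : ℝ × ℝ => 2312/2925 * (p.1 + p.2)).tendsto
        (0, 0)).mono_left nhdsWithin_le_nhds
    rw [ContinuousWithinAt, show ofSqrt s 0 0 = 0 by simp [ofSqrt]]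
    exact squeeze_zero_norm' hbound hlim
  · have hD := le_dslope_ratio hderiv hs hs' hu hv huv
    have hu₁ : 0 < 1 - u ^ 2 := by nlinarith [hu.1, hu.2]
    have hv₁ : 0 < 1 - v ^ 2 := by nlinarith [hv.1, hv.2]
    refine ContinuousWithinAt.div (by fun_prop) ?_ ?_
    · exact (by fun_prop : Continuous fun p : ℝ × ℝ => 2 * (1 - p.1 ^ 2) * (1 - p.2 ^ 2)
        ).continuousWithinAt.mul (continuousWithinAt_dslope_ratio hderiv hcont hs hu hv huv)
    · exact (mul_pos (by positivity) (by linarith)).ne'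

theorem one_add_f₂_eq (hderiv : ∀ x ∈ Ioc (0:ℝ) (1/16), HasDerivAt s (s' x) x)
    (hs : ∀ x ∈ Ioc (0:ℝ) (1/16), |s x| ≤ 1/16) {f₂ : ℝ → ℝ → ℝ}
    (hf₂ : ∀ x ∈ Ioc (0:ℝ) (1/16), ∀ y ∈ Ioc (0:ℝ) (1/16), x ≠ y →
      f₂ x y = (√y * s x - √x * s y) / (√x - √y))
    (hf₂diag : ∀ x ∈ Ioc (0:ℝ) (1/16), f₂ x x = 2 * x * s' x - s x)
    {x y : ℝ} (hx : x ∈ Ioc (0:ℝ) (1/16)) (hy : y ∈ Ioc (0:ℝ) (1/16)) :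
    1 + f₂ x y = gap s √x * gap s √y * dslope (ratio s) √x √y := by
  have hgx := (gap_pos hs (sqrt_mem_Ioc hx)).ne'
  have hgy := (gap_pos hs (sqrt_mem_Ioc hy)).ne'
  rcases eq_or_ne x y with rfl | hne
  · rw [hf₂diag x hx, dslope_same, (hasDerivAt_ratio hderiv hs (sqrt_mem_Ioc hx)).deriv,
      ratioDeriv, sq_sqrt hx.1.le]
    field_simp
    ring
  · have hsqrt : √x ≠ √y := (sqrt_inj hx.1.le hy.1.le).not.mpr hne
    have hxy := sub_ne_zero.mpr hsqrt
    have hyx := sub_ne_zero.mpr hsqrt.symm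
    rw [hf₂ x hx y hy hne, dslope_of_ne _ hsqrt.symm, slope_def_field, ratio, ratio]
    simp only [gap_sqrt s hx.1.le, gap_sqrt s hy.1.le] at hgx hgy ⊢
    field_simp
    ring

theorem one_add_f₂_pos (hderiv : ∀ x ∈ Ioc (0:ℝ) (1/16), HasDerivAt s (s' x) x)
    (hs : ∀ x ∈ Ioc (0:ℝ) (1/16), |s x| ≤ 1/16) (hs' : ∀ x ∈ Ioc (0:ℝ) (1/16), |x * s' x| ≤ 1/16)
    {f₂ : ℝ → ℝ → ℝ}
    (hf₂ : ∀ x ∈ Ioc (0:ℝ) (1/16), ∀ y ∈ Ioc (0:ℝ) (1/16), x ≠ y →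
      f₂ x y = (√y * s x - √x * s y) / (√x - √y))
    (hf₂diag : ∀ x ∈ Ioc (0:ℝ) (1/16), f₂ x x = 2 * x * s' x - s x)
    {x y : ℝ} (hx : x ∈ Ioc (0:ℝ) (1/16)) (hy : y ∈ Ioc (0:ℝ) (1/16)) : 0 < 1 + f₂ x y := by
  have hD := le_dslope_ratio hderiv hs hs' (sqrt_mem_Icc (Ioc_subset_Icc_self hx))
    (sqrt_mem_Icc (Ioc_subset_Icc_self hy)) (add_pos (sqrt_mem_Ioc hx).1 (sqrt_mem_Ioc hy).1)
  rw [one_add_f₂_eq hderiv hs hf₂ hf₂diag hx hy]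
  exact mul_pos (mul_pos (gap_pos hs (sqrt_mem_Ioc hx)) (gap_pos hs (sqrt_mem_Ioc hy)))
    (by linarith)

theorem pplus_eq_ofSqrt (hderiv : ∀ x ∈ Ioc (0:ℝ) (1/16), HasDerivAt s (s' x) x)
    (hs : ∀ x ∈ Ioc (0:ℝ) (1/16), |s x| ≤ 1/16) {f₂ : ℝ → ℝ → ℝ}
    (hf₂ : ∀ x ∈ Ioc (0:ℝ) (1/16), ∀ y ∈ Ioc (0:ℝ) (1/16), x ≠ y →
      f₂ x y = (√y * s x - √x * s y) / (√x - √y))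
    (hf₂diag : ∀ x ∈ Ioc (0:ℝ) (1/16), f₂ x x = 2 * x * s' x - s x)
    {pplus : ℝ → ℝ → ℝ}
    (hp : ∀ x ∈ Icc (0:ℝ) (1/16), ∀ y ∈ Icc (0:ℝ) (1/16), 0 < x * y →
      pplus x y = (√x + √y) * (1 - √x - s x) * (1 - √y - s y) /
        (2 * (1 - x) * (1 - y) * (1 + f₂ x y)))
    (hpx0 : ∀ x ∈ Icc (0:ℝ) (1/16), 0 < x → pplus x 0 = √x * (1 - √x - s x) / (2 * (1 - x)))
    (hp0y : ∀ y ∈ Icc (0:ℝ) (1/16), 0 < y → pplus 0 y = √y * (1 - √y - s y) / (2 * (1 - y)))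
    (hp00 : pplus 0 0 = 0) {x y : ℝ} (hx : x ∈ Icc (0:ℝ) (1/16)) (hy : y ∈ Icc (0:ℝ) (1/16)) :
    pplus x y = ofSqrt s √x √y := by
  have h1x : 1 - x ≠ 0 := by linarith [hx.2]
  have h1y : 1 - y ≠ 0 := by linarith [hy.2]
  rcases hx.1.eq_or_lt with rfl | hx₀ <;> rcases hy.1.eq_or_lt with rfl | hy₀
  · simp [hp00, ofSqrt]
  · have hg := (gap_pos hs (sqrt_mem_Ioc ⟨hy₀, hy.2⟩)).ne'
    have hsqrt := (sqrt_pos.mpr hy₀).ne'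
    rw [hp0y y hy hy₀, ofSqrt, sqrt_zero, dslope_of_ne _ hsqrt, slope_def_field, ratio, ratio,
      sq_sqrt hy₀.le]
    rw [gap_sqrt s hy₀.le] at hg ⊢
    simp only [zero_div, sub_zero, zero_add]
    field_simp
    ring
  · have hg := (gap_pos hs (sqrt_mem_Ioc ⟨hx₀, hx.2⟩)).ne'
    have hsqrt := (sqrt_pos.mpr hx₀).ne'
    rw [hpx0 x hx hx₀, ofSqrt, sqrt_zero, dslope_of_ne _ hsqrt.symm, slope_def_field, ratio, ratio,
      sq_sqrt hx₀.le]
    rw [gap_sqrt s hx₀.le] at hg ⊢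
    simp only [zero_div, zero_sub, add_zero]
    field_simp
    ring
  · have hx' : x ∈ Ioc (0:ℝ) (1/16) := ⟨hx₀, hx.2⟩
    have hy' : y ∈ Ioc (0:ℝ) (1/16) := ⟨hy₀, hy.2⟩
    have hgx := (gap_pos hs (sqrt_mem_Ioc hx')).ne'
    have hgy := (gap_pos hs (sqrt_mem_Ioc hy')).ne'
    rw [hp x hx y hy (mul_pos hx₀ hy₀), one_add_f₂_eq hderiv hs hf₂ hf₂diag hx' hy', ofSqrt,
      sq_sqrt hx₀.le, sq_sqrt hy₀.le, ← gap_sqrt s hx₀.le, ← gap_sqrt s hy₀.le]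
    field_simp

end PPlus

theorem stmt_7_general (s s' : ℝ → ℝ)
    (hderiv : ∀ x ∈ Set.Ioc (0:ℝ) (1/16), HasDerivAt s (s' x) x)
    (hcont : ContinuousOn s' (Set.Ioc (0:ℝ) (1/16)))
    (hs : ∀ x ∈ Set.Ioc (0:ℝ) (1/16), |s x| ≤ 1/16)
    (hs' : ∀ x ∈ Set.Ioc (0:ℝ) (1/16), |x * s' x| ≤ 1/16)
    (f₂ : ℝ → ℝ → ℝ)
    (hf₂ : ∀ x ∈ Set.Ioc (0:ℝ) (1/16), ∀ y ∈ Set.Ioc (0:ℝ) (1/16), x ≠ y →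
      f₂ x y = (Real.sqrt y * s x - Real.sqrt x * s y) / (Real.sqrt x - Real.sqrt y))
    (hf₂diag : ∀ x ∈ Set.Ioc (0:ℝ) (1/16), f₂ x x = 2 * x * s' x - s x)
    (pplus : ℝ → ℝ → ℝ)
    (hp : ∀ x ∈ Set.Icc (0:ℝ) (1/16), ∀ y ∈ Set.Icc (0:ℝ) (1/16), 0 < x * y →
      pplus x y = (Real.sqrt x + Real.sqrt y) * (1 - Real.sqrt x - s x) * (1 - Real.sqrt y - s y) /
        (2 * (1 - x) * (1 - y) * (1 + f₂ x y)))
    (hpx0 : ∀ x ∈ Set.Icc (0:ℝ) (1/16), 0 < x →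
      pplus x 0 = Real.sqrt x * (1 - Real.sqrt x - s x) / (2 * (1 - x)))
    (hp0y : ∀ y ∈ Set.Icc (0:ℝ) (1/16), 0 < y →
      pplus 0 y = Real.sqrt y * (1 - Real.sqrt y - s y) / (2 * (1 - y)))
    (hp00 : pplus 0 0 = 0) :
    (∀ x ∈ Set.Icc (0:ℝ) (1/16), ∀ y ∈ Set.Icc (0:ℝ) (1/16), 0 < x * y →
        2 * (1 - x) * (1 - y) * (1 + f₂ x y) ≠ 0) ∧
    ContinuousOn (fun p : ℝ × ℝ => pplus p.1 p.2)
      (Set.Icc (0:ℝ) (1/16) ×ˢ Set.Icc (0:ℝ) (1/16)) ∧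
    (∀ x ∈ Set.Icc (0:ℝ) (1/16), ∀ y ∈ Set.Icc (0:ℝ) (1/16),
        pplus x y ∈ Set.Icc (0:ℝ) (1/2)) := by
  have hpplus := fun x (hx : x ∈ Icc (0:ℝ) (1/16)) y (hy : y ∈ Icc (0:ℝ) (1/16)) =>
    PPlus.pplus_eq_ofSqrt hderiv hs hf₂ hf₂diag hp hpx0 hp0y hp00 hx hy
  refine ⟨fun x hx y hy hxy => ?_, ?_, fun x hx y hy => ?_⟩
  · have hx' : x ∈ Ioc (0:ℝ) (1/16) := ⟨pos_of_mul_pos_left hxy hy.1, hx.2⟩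
    have hy' : y ∈ Ioc (0:ℝ) (1/16) := ⟨pos_of_mul_pos_right hxy hx.1, hy.2⟩
    have h1x : 0 < 1 - x := by linarith [hx.2]
    have h1y : 0 < 1 - y := by linarith [hy.2]
    exact (mul_pos (mul_pos (mul_pos two_pos h1x) h1y)
      (PPlus.one_add_f₂_pos hderiv hs hs' hf₂ hf₂diag hx' hy')).ne'
  · have hsqrt : MapsTo (fun p : ℝ × ℝ => (√p.1, √p.2)) (Icc 0 (1/16) ×ˢ Icc 0 (1/16))
        (Icc 0 (1/4) ×ˢ Icc 0 (1/4)) := fun p hp =>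
      ⟨PPlus.sqrt_mem_Icc hp.1, PPlus.sqrt_mem_Icc hp.2⟩
    exact ((PPlus.continuousOn_ofSqrt hderiv hcont hs hs').comp (by fun_prop) hsqrt).congr
      fun p hp => hpplus p.1 hp.1 p.2 hp.2
  · rw [hpplus x hx y hy]
    have hu := PPlus.sqrt_mem_Icc hx
    have hv := PPlus.sqrt_mem_Icc hy
    exact ⟨PPlus.ofSqrt_nonneg hderiv hs hs' hu hv,
      (PPlus.ofSqrt_le hderiv hs hs' hu hv).trans (by linarith [hu.2, hv.2])⟩

theorem stmt_7 (s s' : ℝ → ℝ)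
    (hderiv : ∀ x ∈ Set.Ioc (0:ℝ) (1/16), HasDerivAt s (s' x) x)
    (hcont : ContinuousOn s' (Set.Ioc (0:ℝ) (1/16)))
    (hs : ∀ x ∈ Set.Ioc (0:ℝ) (1/16), |s x| ≤ 1/16)
    (hs' : ∀ x ∈ Set.Ioc (0:ℝ) (1/16), |x * s' x| ≤ 1/16)
    (f₁ f₂ : ℝ → ℝ → ℝ)
    (hf₁ : ∀ x ∈ Set.Ioc (0:ℝ) (1/16), ∀ y ∈ Set.Ioc (0:ℝ) (1/16), x ≠ y →
      f₁ x y = (Real.sqrt x * s x - Real.sqrt y * s y) / (Real.sqrt x - Real.sqrt y))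
    (hf₁diag : ∀ x ∈ Set.Ioc (0:ℝ) (1/16), f₁ x x = 2 * x * s' x + s x)
    (hf₂ : ∀ x ∈ Set.Ioc (0:ℝ) (1/16), ∀ y ∈ Set.Ioc (0:ℝ) (1/16), x ≠ y →
      f₂ x y = (Real.sqrt y * s x - Real.sqrt x * s y) / (Real.sqrt x - Real.sqrt y))
    (hf₂diag : ∀ x ∈ Set.Ioc (0:ℝ) (1/16), f₂ x x = 2 * x * s' x - s x)
    (pplus : ℝ → ℝ → ℝ)
    (hp : ∀ x ∈ Set.Icc (0:ℝ) (1/16), ∀ y ∈ Set.Icc (0:ℝ) (1/16), 0 < x * y →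
      pplus x y = (Real.sqrt x + Real.sqrt y) * (1 - Real.sqrt x - s x) * (1 - Real.sqrt y - s y) /
        (2 * (1 - x) * (1 - y) * (1 + f₂ x y)))
    (hpx0 : ∀ x ∈ Set.Icc (0:ℝ) (1/16), 0 < x →
      pplus x 0 = Real.sqrt x * (1 - Real.sqrt x - s x) / (2 * (1 - x)))
    (hp0y : ∀ y ∈ Set.Icc (0:ℝ) (1/16), 0 < y →
      pplus 0 y = Real.sqrt y * (1 - Real.sqrt y - s y) / (2 * (1 - y)))
    (hp00 : pplus 0 0 = 0) :
    (∀ x ∈ Set.Icc (0:ℝ) (1/16), ∀ y ∈ Set.Icc (0:ℝ) (1/16), 0 < x * y →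
        2 * (1 - x) * (1 - y) * (1 + f₂ x y) ≠ 0) ∧
    ContinuousOn (fun p : ℝ × ℝ => pplus p.1 p.2)
      (Set.Icc (0:ℝ) (1/16) ×ˢ Set.Icc (0:ℝ) (1/16)) ∧
    (∀ x ∈ Set.Icc (0:ℝ) (1/16), ∀ y ∈ Set.Icc (0:ℝ) (1/16),
        pplus x y ∈ Set.Icc (0:ℝ) (1/2)) :=
  stmt_7_general s s' hderiv hcont hs hs' f₂ hf₂ hf₂diag pplus hp hpx0 hp0y hp00
end

section
/- In the finite stochastic game with two nonabsorbing states ω₊, ω₋ and absorbing states 1*, −1* with parameters p₊*, p₋* ∈ (0,1], the λ-discounted values satisfy lim_{λ→0} v_λ(ω₊) = lim_{λ→0} v_λ(ω₋) = (√p₊* − √p₋*)/(√p₊* + √p₋*). -/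
open Real Set Filter Topology

private lemma comb_le_max' {c : ℝ} (h0 : 0 ≤ c) (h1 : c ≤ 1) (u w : ℝ) :
    (1-c)*u + c*w ≤ max u w := by
  rcases le_total u w with h | h
  · have : (1-c)*u + c*w ≤ w := by nlinarith
    exact this.trans (le_max_right u w)
  · have : (1-c)*u + c*w ≤ u := by nlinarith
    exact this.trans (le_max_left u w)

private lemma min_le_comb' {c : ℝ} (h0 : 0 ≤ c) (h1 : c ≤ 1) (u w : ℝ) :
    min u w ≤ (1-c)*u + c*w := by
  rcases le_total u w with h | h
  · have : u ≤ (1-c)*u + c*w := by nlinarith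
    exact (min_le_left u w).trans this
  · have : w ≤ (1-c)*u + c*w := by nlinarith
    exact (min_le_right u w).trans this

private lemma val_le_max' (f : ℝ → ℝ → ℝ)
    (hfx : ∀ x y : ℝ, f x y = (1-x)*f 0 y + x*f 1 y)
    (hfy : ∀ x y : ℝ, f x y = (1-y)*f x 0 + y*f x 1)
    {y : ℝ} (hy : y ∈ Set.Icc (0:ℝ) 1) :
    (⨅ y' : Set.Icc (0:ℝ) 1, ⨆ x : Set.Icc (0:ℝ) 1, f x y') ≤ max (f 0 y) (f 1 y) := by
  have hbddA : ∀ y' : Set.Icc (0:ℝ) 1, BddAbove (Set.range fun x : Set.Icc (0:ℝ) 1 => f x y') := by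
    intro y'
    refine ⟨max (f 0 y') (f 1 y'), ?_⟩
    rintro _ ⟨x, rfl⟩
    show f (x:ℝ) (y':ℝ) ≤ _
    rw [hfx x y']
    exact comb_le_max' x.2.1 x.2.2 _ _
  have hbddB : BddBelow (Set.range fun y' : Set.Icc (0:ℝ) 1 =>
      ⨆ x : Set.Icc (0:ℝ) 1, f x y') := by
    refine ⟨min (f 0 0) (f 0 1), ?_⟩
    rintro _ ⟨y', rfl⟩
    have h1 : f 0 (y':ℝ) ≤ ⨆ x : Set.Icc (0:ℝ) 1, f x y' :=
      le_ciSup (hbddA y') ⟨0, by norm_num, by norm_num⟩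
    have h2 : min (f 0 0) (f 0 1) ≤ f 0 (y':ℝ) := by
      rw [hfy 0 y']
      exact min_le_comb' y'.2.1 y'.2.2 _ _
    linarith
  have h3 : (⨅ y' : Set.Icc (0:ℝ) 1, ⨆ x : Set.Icc (0:ℝ) 1, f x y') ≤
      ⨆ x : Set.Icc (0:ℝ) 1, f x (⟨y, hy⟩ : Set.Icc (0:ℝ) 1) := ciInf_le hbddB _
  refine h3.trans (ciSup_le ?_)
  intro x
  rw [hfx x y]
  exact comb_le_max' x.2.1 x.2.2 _ _

private lemma min_le_val' (f : ℝ → ℝ → ℝ)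
    (hfx : ∀ x y : ℝ, f x y = (1-x)*f 0 y + x*f 1 y)
    (hfy : ∀ x y : ℝ, f x y = (1-y)*f x 0 + y*f x 1)
    {x : ℝ} (hx : x ∈ Set.Icc (0:ℝ) 1) :
    min (f x 0) (f x 1) ≤ ⨆ x' : Set.Icc (0:ℝ) 1, ⨅ y : Set.Icc (0:ℝ) 1, f x' y := by
  have hbddB : ∀ x' : Set.Icc (0:ℝ) 1, BddBelow (Set.range fun y : Set.Icc (0:ℝ) 1 => f x' y) := by
    intro x'
    refine ⟨min (f x' 0) (f x' 1), ?_⟩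
    rintro _ ⟨y, rfl⟩
    show _ ≤ f (x':ℝ) (y:ℝ)
    rw [hfy x' y]
    exact min_le_comb' y.2.1 y.2.2 _ _
  have hbddA : BddAbove (Set.range fun x' : Set.Icc (0:ℝ) 1 =>
      ⨅ y : Set.Icc (0:ℝ) 1, f x' y) := by
    refine ⟨max (f 0 0) (f 1 0), ?_⟩
    rintro _ ⟨x', rfl⟩
    have h1 : (⨅ y : Set.Icc (0:ℝ) 1, f x' y) ≤ f (x':ℝ) 0 :=
      ciInf_le (hbddB x') ⟨0, by norm_num, by norm_num⟩
    have h2 : f (x':ℝ) 0 ≤ max (f 0 0) (f 1 0) := by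
      rw [hfx x' 0]
      exact comb_le_max' x'.2.1 x'.2.2 _ _
    linarith
  have h3 : (⨅ y : Set.Icc (0:ℝ) 1, f (⟨x, hx⟩ : Set.Icc (0:ℝ) 1) y) ≤
      ⨆ x' : Set.Icc (0:ℝ) 1, ⨅ y : Set.Icc (0:ℝ) 1, f x' y := le_ciSup hbddA _
  refine le_trans (le_ciInf ?_) h3
  intro y
  rw [hfy x y]
  exact min_le_comb' y.2.1 y.2.2 _ _

private lemma step_t24 (lam t c P : ℝ) (hlam0 : 0 < lam) (hlam1 : lam ≤ 1/48)
    (ht0 : 0 < t) (ht2 : t ≤ 2) (hc0 : 0 ≤ c) (hc2 : c ≤ 2) (hP0 : 0 ≤ P) (hP2 : P ≤ 2)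
    (hEq : lam*c*(2*t+P) = (1-lam)*t^2) : t^2 ≤ 24*lam := by
  have hQ : 0 ≤ 2*t+P := by linarith
  have h1 : c*(2*t+P) ≤ 12 := by nlinarith
  have h2 : lam*(c*(2*t+P)) ≤ 12*lam := by nlinarith
  have h3 : lam*t^2 ≤ 4*lam := by nlinarith
  nlinarith [hEq]

private lemma step_h16 (u w m t ab : ℝ) (hu0 : 0 ≤ u) (hw0 : 0 ≤ w) (hm0 : 0 < m)
    (hsum : m ≤ u + w) (he : u^2 - w^2 = 2*t*ab) (hab : ab^2 ≤ 4) (ht0 : 0 ≤ t) :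
    (u-w)^2 * m^2 ≤ 16 * t^2 := by
  have h1 : (u-w)^2*m^2 ≤ (u-w)^2*(u+w)^2 := by
    have : m^2 ≤ (u+w)^2 := by nlinarith
    nlinarith [sq_nonneg (u-w)]
  have h2 : (u-w)^2*(u+w)^2 = (2*t*ab)^2 := by
    rw [show (u-w)^2*(u+w)^2 = (u^2-w^2)^2 from by ring, he]
  have h3 : (2*t*ab)^2 ≤ 16*t^2 := by nlinarith [sq_nonneg t, sq_nonneg (t*ab)]
  linarith

private lemma step_h34 (e sm m t : ℝ) (hsm0 : 0 ≤ sm) (hsm1 : sm ≤ 1)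
    (hm0 : 0 ≤ m) (hm1 : m ≤ 1) (h16 : e^2*m^2 ≤ 16*t^2) :
    (e+sm*t)^2*m^2 ≤ 34*t^2 := by
  have a1 : sm^2 ≤ 1 := by nlinarith
  have a2 : m^2 ≤ 1 := by nlinarith
  have h1 : sm^2*m^2 ≤ 1 := by nlinarith
  have h2 : (sm*t)^2*m^2 ≤ t^2 := by nlinarith [sq_nonneg t, sq_nonneg (sm*t*m)]
  nlinarith [sq_nonneg ((e-sm*t)*m)]

private lemma sq_sub_le (x y : ℝ) : (x - y)^2 ≤ 2*x^2 + 2*y^2 := by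
  nlinarith [sq_nonneg (x+y)]

private lemma mul_le_two' (p c : ℝ) (hp0 : 0 ≤ p) (hp1 : p ≤ 1) (hc0 : 0 ≤ c) (hc2 : c ≤ 2) :
    p*c ≤ 2 := by nlinarith

private lemma le_one_of_sq (x : ℝ) (h : x^2 ≤ 1/2) : x ≤ 1 := by nlinarith

private lemma sqmul_le (s m : ℝ) (hs0 : 0 ≤ s) (hs2 : s ≤ 2) (hm0 : 0 ≤ m) (hm1 : m ≤ 1) :
    s^2*m^2 ≤ 4 := by
  have a1 : s^2 ≤ 4 := by nlinarith
  have a2 : m^2 ≤ 1 := by nlinarith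
  nlinarith [mul_nonneg (sq_nonneg s) (by linarith : (0:ℝ) ≤ 1 - m^2)]

private lemma ge_one_aux (lam a : ℝ) (h0 : 0 < lam) (h : lam + (1-lam)*a ≤ a) : 1 ≤ a := by
  nlinarith

private lemma le_one_aux (lam a : ℝ) (h0 : 0 < lam) (h : a ≤ lam + (1-lam)*a) : a ≤ 1 := by
  nlinarith

private lemma le_negone_aux (lam b : ℝ) (h0 : 0 < lam) (h : b ≤ -lam + (1-lam)*b) : b ≤ -1 := by
  nlinarith

private lemma negone_le_aux (lam b : ℝ) (h0 : 0 < lam) (h : -lam + (1-lam)*b ≤ b) : -1 ≤ b := by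
  nlinarith

private lemma core_13 (pp pm a b lam : ℝ) (hpp : pp ∈ Set.Ioc (0:ℝ) 1) (hpm : pm ∈ Set.Ioc (0:ℝ) 1)
    (hlam0 : 0 < lam) (hlam1 : lam ≤ 1/48)
    (hab : b < a) (ha1 : a ≤ 1) (hb1 : -1 ≤ b)
    (hEq1 : lam*(1-a)*(2*(a-b)+pp*(1-a)) = (1-lam)*(a-b)^2)
    (hEq2 : lam*(1+b)*(2*(a-b)+pm*(1+b)) = (1-lam)*(a-b)^2) :
    (a - (Real.sqrt pp - Real.sqrt pm)/(Real.sqrt pp + Real.sqrt pm))^2 *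
      ((Real.sqrt pp + Real.sqrt pm)^2 * (min (Real.sqrt pp) (Real.sqrt pm))^2) ≤ 1200 * lam ∧
    (b - (Real.sqrt pp - Real.sqrt pm)/(Real.sqrt pp + Real.sqrt pm))^2 *
      ((Real.sqrt pp + Real.sqrt pm)^2 * (min (Real.sqrt pp) (Real.sqrt pm))^2) ≤ 5000 * lam := by
  obtain ⟨hpp0, hpp1⟩ := hpp
  obtain ⟨hpm0, hpm1⟩ := hpm
  have hsp0 : 0 < Real.sqrt pp := Real.sqrt_pos.mpr hpp0
  have hsm0 : 0 < Real.sqrt pm := Real.sqrt_pos.mpr hpm0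
  have hsp1 : Real.sqrt pp ≤ 1 := by
    rw [show (1:ℝ) = Real.sqrt 1 by simp]; exact Real.sqrt_le_sqrt hpp1
  have hsm1 : Real.sqrt pm ≤ 1 := by
    rw [show (1:ℝ) = Real.sqrt 1 by simp]; exact Real.sqrt_le_sqrt hpm1
  have hsp2 : (Real.sqrt pp)^2 = pp := Real.sq_sqrt hpp0.le
  have hsm2 : (Real.sqrt pm)^2 = pm := Real.sq_sqrt hpm0.le
  set sp := Real.sqrt pp
  set sm := Real.sqrt pm
  set m := min sp sm with hmdef
  have hm0 : 0 < m := lt_min hsp0 hsm0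
  have hm1 : m ≤ 1 := (min_le_left _ _).trans hsp1
  set s := sp + sm with hsdef
  have hs0 : 0 < s := by positivity
  set v := (sp - sm)/s with hvdef
  have hsv : s * v = sp - sm := mul_div_cancel₀ _ hs0.ne'
  have ht0 : 0 < a - b := sub_pos.mpr hab
  have ht2 : a - b ≤ 2 := by linarith
  have hba : -1 ≤ a := by linarith
  have hab1 : b ≤ 1 := by linarith
  have hP2 : pp*(1-a) ≤ 2 := mul_le_two' _ _ hpp0.le hpp1 (by linarith) (by linarith)
  have hP0 : 0 ≤ pp*(1-a) := mul_nonneg hpp0.le (by linarith)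
  have ht24 : (a-b)^2 ≤ 24*lam :=
    step_t24 lam (a-b) (1-a) (pp*(1-a)) hlam0 hlam1 ht0 ht2 (by linarith) (by linarith) hP0 hP2 hEq1
  have ht1 : a - b ≤ 1 := le_one_of_sq _ (by linarith)
  have hcanc : (1-a)*(2*(a-b)+pp*(1-a)) = (1+b)*(2*(a-b)+pm*(1+b)) := by
    have h2 : lam * ((1-a)*(2*(a-b)+pp*(1-a))) = lam * ((1+b)*(2*(a-b)+pm*(1+b))) := by
      linear_combination hEq1.trans hEq2.symm
    exact mul_left_cancel₀ hlam0.ne' h2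
  have hdiff : pp*(1-a)^2 - pm*(1+b)^2 = 2*(a-b)*(a+b) := by linear_combination hcanc
  have hu0 : 0 ≤ sp*(1-a) := mul_nonneg hsp0.le (by linarith)
  have hw0 : 0 ≤ sm*(1+b) := mul_nonneg hsm0.le (by linarith)
  have hsum : m ≤ sp*(1-a) + sm*(1+b) := by
    have h1 : m*(1-a) ≤ sp*(1-a) := mul_le_mul_of_nonneg_right (min_le_left sp sm) (by linarith)
    have h2 : m*(1+b) ≤ sm*(1+b) := mul_le_mul_of_nonneg_right (min_le_right sp sm) (by linarith)
    have h3 : m*(1-a) + m*(1+b) = 2*m - m*(a-b) := by ring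
    have h4 : 0 ≤ m*(1-(a-b)) := mul_nonneg hm0.le (by linarith)
    linarith
  have huw : (sp*(1-a))^2 - (sm*(1+b))^2 = 2*(a-b)*(a+b) := by
    rw [show (sp*(1-a))^2 = sp^2*(1-a)^2 from by ring, show (sm*(1+b))^2 = sm^2*(1+b)^2 from by ring,
      hsp2, hsm2]
    exact hdiff
  have hab2 : (a+b)^2 ≤ 4 := by
    have := sq_le_sq' (show -(2:ℝ) ≤ a+b by linarith) (show a+b ≤ 2 by linarith)
    linarith
  have h16 : (sp*(1-a) - sm*(1+b))^2 * m^2 ≤ 16*(a-b)^2 :=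
    step_h16 _ _ _ _ _ hu0 hw0 hm0 hsum huw hab2 ht0.le
  have hkey : s*(a-v) = (sm*(1+b) - sp*(1-a)) + sm*(a-b) := by linear_combination -hsv
  have h34 : (s*(a-v))^2 * m^2 ≤ 34*(a-b)^2 := by
    rw [hkey]
    have h16' : (sm*(1+b) - sp*(1-a))^2 * m^2 ≤ 16*(a-b)^2 := by
      have e : (sm*(1+b) - sp*(1-a))^2 = (sp*(1-a) - sm*(1+b))^2 := by ring
      rw [e]; exact h16
    exact step_h34 (sm*(1+b) - sp*(1-a)) sm m (a-b) hsm0.le hsm1 hm0.le hm1 h16'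
  have hfin1 : (a-v)^2 * (s^2*m^2) ≤ 1200*lam := by
    have e : (a-v)^2 * (s^2*m^2) = (s*(a-v))^2 * m^2 := by ring
    rw [e]
    have h35 : 34*(a-b)^2 ≤ 34*(24*lam) := by linarith
    linarith
  refine ⟨hfin1, ?_⟩
  have hbv : (b-v)^2 ≤ 2*(a-v)^2 + 2*(a-b)^2 := by
    have := sq_sub_le (a-v) (a-b)
    have e : b - v = (a-v) - (a-b) := by ring
    rw [e]; linarith
  have hsm2pos : (0:ℝ) ≤ s^2*m^2 := by positivity
  have hs4 : s^2*m^2 ≤ 4 := sqmul_le s m hs0.le (by linarith) hm0.le hm1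
  have h3 : (a-b)^2*(s^2*m^2) ≤ 24*lam*4 := by
    have := mul_le_mul ht24 hs4 hsm2pos (by positivity : (0:ℝ) ≤ 24*lam)
    linarith
  calc (b-v)^2*(s^2*m^2) ≤ (2*(a-v)^2 + 2*(a-b)^2)*(s^2*m^2) :=
        mul_le_mul_of_nonneg_right hbv hsm2pos
    _ = 2*((a-v)^2*(s^2*m^2)) + 2*((a-b)^2*(s^2*m^2)) := by ring
    _ ≤ 2*(1200*lam) + 2*(24*lam*4) := by linarith
    _ ≤ 5000*lam := by linarith

theorem stmt_13 (pp pm : ℝ) (hpp : pp ∈ Set.Ioc (0:ℝ) 1) (hpm : pm ∈ Set.Ioc (0:ℝ) 1)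
    (vp vm : ℝ → ℝ)
    (Φp Φm : ℝ → ℝ → ℝ → ℝ)
    (hΦp : ∀ lam x y : ℝ, Φp lam x y =
      lam * 1 + (1 - lam) * ((1 - x) * (1 - y) * vp lam
        + (x * (1 - y) + y * (1 - x)) * vm lam
        + x * y * (pp * 1 + (1 - pp) * vp lam)))
    (hΦm : ∀ lam x y : ℝ, Φm lam x y =
      lam * (-1) + (1 - lam) * ((1 - x) * (1 - y) * vm lam
        + (x * (1 - y) + y * (1 - x)) * vp lam
        + x * y * (pm * (-1) + (1 - pm) * vm lam)))
    (hvp₁ : ∀ lam ∈ Set.Ioc (0:ℝ) 1,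
      vp lam = ⨅ y : Set.Icc (0:ℝ) 1, ⨆ x : Set.Icc (0:ℝ) 1, Φp lam x y)
    (hvp₂ : ∀ lam ∈ Set.Ioc (0:ℝ) 1,
      vp lam = ⨆ x : Set.Icc (0:ℝ) 1, ⨅ y : Set.Icc (0:ℝ) 1, Φp lam x y)
    (hvm₁ : ∀ lam ∈ Set.Ioc (0:ℝ) 1,
      vm lam = ⨅ y : Set.Icc (0:ℝ) 1, ⨆ x : Set.Icc (0:ℝ) 1, Φm lam x y)
    (hvm₂ : ∀ lam ∈ Set.Ioc (0:ℝ) 1,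
      vm lam = ⨆ x : Set.Icc (0:ℝ) 1, ⨅ y : Set.Icc (0:ℝ) 1, Φm lam x y) :
    Filter.Tendsto vp (nhdsWithin 0 (Set.Ioi 0))
      (nhds ((Real.sqrt pp - Real.sqrt pm) / (Real.sqrt pp + Real.sqrt pm))) ∧
    Filter.Tendsto vm (nhdsWithin 0 (Set.Ioi 0))
      (nhds ((Real.sqrt pp - Real.sqrt pm) / (Real.sqrt pp + Real.sqrt pm))) := by
  obtain ⟨hpp0, hpp1⟩ := hpp
  obtain ⟨hpm0, hpm1⟩ := hpm
  have hsp0 : 0 < Real.sqrt pp := Real.sqrt_pos.mpr hpp0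
  have hsm0 : 0 < Real.sqrt pm := Real.sqrt_pos.mpr hpm0
  set v := (Real.sqrt pp - Real.sqrt pm)/(Real.sqrt pp + Real.sqrt pm) with hv
  set M := (Real.sqrt pp + Real.sqrt pm)^2 * (min (Real.sqrt pp) (Real.sqrt pm))^2 with hM
  have hM0 : 0 < M := by
    have h := lt_min hsp0 hsm0
    rw [hM]
    positivity
  have key : ∀ lam ∈ Set.Ioc (0:ℝ) (1/48),
      (vp lam - v)^2 * M ≤ 1200*lam ∧ (vm lam - v)^2 * M ≤ 5000*lam := by
    intro lam hl
    have hlam : lam ∈ Set.Ioc (0:ℝ) 1 := ⟨hl.1, hl.2.trans (by norm_num)⟩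
    have hlam1 : lam ≤ 1 := hlam.2
    have apx : ∀ x y : ℝ, Φp lam x y = (1-x)*Φp lam 0 y + x*Φp lam 1 y := by
      intro x y; simp only [hΦp]; ring
    have apy : ∀ x y : ℝ, Φp lam x y = (1-y)*Φp lam x 0 + y*Φp lam x 1 := by
      intro x y; simp only [hΦp]; ring
    have amx : ∀ x y : ℝ, Φm lam x y = (1-x)*Φm lam 0 y + x*Φm lam 1 y := by
      intro x y; simp only [hΦm]; ring
    have amy : ∀ x y : ℝ, Φm lam x y = (1-y)*Φm lam x 0 + y*Φm lam x 1 := by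
      intro x y; simp only [hΦm]; ring
    have spsym : ∀ x y : ℝ, Φp lam x y = Φp lam y x := by
      intro x y; simp only [hΦp]; ring
    have smsym : ∀ x y : ℝ, Φm lam x y = Φm lam y x := by
      intro x y; simp only [hΦm]; ring
    have k1p : ∀ y ∈ Set.Icc (0:ℝ) 1, vp lam ≤ max (Φp lam 0 y) (Φp lam 1 y) := by
      intro y hy; rw [hvp₁ lam hlam]; exact val_le_max' (Φp lam) apx apy hy
    have k2p : ∀ x ∈ Set.Icc (0:ℝ) 1, min (Φp lam x 0) (Φp lam x 1) ≤ vp lam := by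
      intro x hx; rw [hvp₂ lam hlam]; exact min_le_val' (Φp lam) apx apy hx
    have k1m : ∀ y ∈ Set.Icc (0:ℝ) 1, vm lam ≤ max (Φm lam 0 y) (Φm lam 1 y) := by
      intro y hy; rw [hvm₁ lam hlam]; exact val_le_max' (Φm lam) amx amy hy
    have k2m : ∀ x ∈ Set.Icc (0:ℝ) 1, min (Φm lam x 0) (Φm lam x 1) ≤ vm lam := by
      intro x hx; rw [hvm₂ lam hlam]; exact min_le_val' (Φm lam) amx amy hx
    set a := vp lam with hadef
    set b := vm lam with hbdef
    have e00p : Φp lam 0 0 = lam + (1-lam)*a := by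
      rw [hΦp, ← hadef, ← hbdef]; ring
    have e01p : Φp lam 0 1 = lam + (1-lam)*b := by
      rw [hΦp, ← hadef, ← hbdef]; ring
    have e10p : Φp lam 1 0 = lam + (1-lam)*b := by
      rw [hΦp, ← hadef, ← hbdef]; ring
    have e00m : Φm lam 0 0 = -lam + (1-lam)*b := by
      rw [hΦm, ← hadef, ← hbdef]; ring
    have e01m : Φm lam 0 1 = -lam + (1-lam)*a := by
      rw [hΦm, ← hadef, ← hbdef]; ring
    have e10m : Φm lam 1 0 = -lam + (1-lam)*a := by
      rw [hΦm, ← hadef, ← hbdef]; ring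
    have hab : b < a := by
      by_contra hc
      push_neg at hc
      have h1 := k2p 0 (by norm_num)
      rw [e00p, e01p, min_eq_left (by
        have := mul_le_mul_of_nonneg_left hc (by linarith : (0:ℝ) ≤ 1-lam)
        linarith)] at h1
      have hA := ge_one_aux lam a hl.1 h1
      have h2 := k1m 0 (by norm_num)
      rw [e00m, e10m, max_eq_left (by
        have := mul_le_mul_of_nonneg_left hc (by linarith : (0:ℝ) ≤ 1-lam)
        linarith)] at h2
      have hB := le_negone_aux lam b hl.1 h2
      linarith
    have ha1 : a ≤ 1 := by
      have h := k1p 0 (by norm_num)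
      rw [e00p, e10p, max_eq_left (by
        have := mul_le_mul_of_nonneg_left hab.le (by linarith : (0:ℝ) ≤ 1-lam)
        linarith)] at h
      exact le_one_aux lam a hl.1 h
    have hb1 : -1 ≤ b := by
      have h := k2m 0 (by norm_num)
      rw [e00m, e01m, min_eq_left (by
        have := mul_le_mul_of_nonneg_left hab.le (by linarith : (0:ℝ) ≤ 1-lam)
        linarith)] at h
      exact negone_le_aux lam b hl.1 h
    -- plus-state equation
    have hD : 0 < 2*(a-b) + pp*(1-a) := by
      have : 0 ≤ pp*(1-a) := mul_nonneg hpp0.le (by linarith)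
      linarith
    set xh := (a-b)/(2*(a-b) + pp*(1-a)) with hxh
    have hxe : xh * (2*(a-b) + pp*(1-a)) = a-b := div_mul_cancel₀ _ hD.ne'
    have hxmem : xh ∈ Set.Icc (0:ℝ) 1 := by
      constructor
      · exact div_nonneg (by linarith) hD.le
      · rw [hxh, div_le_one hD]
        have : 0 ≤ pp*(1-a) := mul_nonneg hpp0.le (by linarith)
        linarith
    have hABp : Φp lam xh 0 = Φp lam xh 1 := by
      simp only [hΦp, ← hadef, ← hbdef]
      linear_combination (lam - 1) * hxe
    have hminx := k2p xh hxmem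
    have hmaxx := k1p xh hxmem
    rw [spsym 0 xh, spsym 1 xh, hABp, max_self] at hmaxx
    rw [hABp, min_self] at hminx
    have haA0 : a = Φp lam xh 0 := by
      rw [hABp]; exact le_antisymm hmaxx hminx
    have hstep : lam*(1-a) = (1-lam)*(xh*(a-b)) := by
      rw [hΦp, ← hadef, ← hbdef] at haA0
      linear_combination -haA0
    have hEq1 : lam*(1-a)*(2*(a-b)+pp*(1-a)) = (1-lam)*(a-b)^2 := by
      rw [hstep]
      linear_combination (1-lam)*(a-b)*hxe
    -- minus-state equation
    have hD' : 0 < 2*(a-b) + pm*(1+b) := by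
      have : 0 ≤ pm*(1+b) := mul_nonneg hpm0.le (by linarith)
      linarith
    set yh := (a-b)/(2*(a-b) + pm*(1+b)) with hyh
    have hye : yh * (2*(a-b) + pm*(1+b)) = a-b := div_mul_cancel₀ _ hD'.ne'
    have hymem : yh ∈ Set.Icc (0:ℝ) 1 := by
      constructor
      · exact div_nonneg (by linarith) hD'.le
      · rw [hyh, div_le_one hD']
        have : 0 ≤ pm*(1+b) := mul_nonneg hpm0.le (by linarith)
        linarith
    have hABm : Φm lam yh 0 = Φm lam yh 1 := by
      simp only [hΦm, ← hadef, ← hbdef]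
      linear_combination (1 - lam) * hye
    have hminy := k2m yh hymem
    have hmaxy := k1m yh hymem
    rw [smsym 0 yh, smsym 1 yh, hABm, max_self] at hmaxy
    rw [hABm, min_self] at hminy
    have haB0 : b = Φm lam yh 0 := by
      rw [hABm]; exact le_antisymm hmaxy hminy
    have hstep2 : lam*(1+b) = (1-lam)*(yh*(a-b)) := by
      rw [hΦm, ← hadef, ← hbdef] at haB0
      linear_combination haB0
    have hEq2 : lam*(1+b)*(2*(a-b)+pm*(1+b)) = (1-lam)*(a-b)^2 := by
      rw [hstep2]
      linear_combination (1-lam)*(a-b)*hye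
    exact core_13 pp pm a b lam ⟨hpp0, hpp1⟩ ⟨hpm0, hpm1⟩ hl.1 hl.2 hab ha1 hb1 hEq1 hEq2
  have habs : ∀ (f : ℝ → ℝ) (c : ℝ), 0 ≤ c →
      (∀ lam ∈ Set.Ioc (0:ℝ) (1/48), (f lam - v)^2 * M ≤ c*lam) →
      Filter.Tendsto f (nhdsWithin 0 (Set.Ioi 0)) (nhds v) := by
    intro f c hc hf
    have h1 : Tendsto (fun l => (f l - v)^2) (nhdsWithin 0 (Set.Ioi 0)) (nhds 0) := by
      have hb : ∀ᶠ l in nhdsWithin (0:ℝ) (Set.Ioi 0), (f l - v)^2 ≤ (c/M)*l := by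
        filter_upwards [Ioc_mem_nhdsGT_of_mem
          (show (0:ℝ) ∈ Set.Ico (0:ℝ) (1/48) by constructor <;> norm_num)] with l hl
        rw [div_mul_eq_mul_div, le_div_iff₀ hM0]
        linarith [hf l hl]
      have hg : Tendsto (fun l : ℝ => (c/M)*l) (nhdsWithin 0 (Set.Ioi 0)) (nhds 0) := by
        have h5 : Tendsto (fun l : ℝ => (c/M)*l) (nhds 0) (nhds ((c/M)*0)) :=
          (continuous_const.mul continuous_id).tendsto 0
        simpa using h5.mono_left nhdsWithin_le_nhds
      exact squeeze_zero' (Filter.Eventually.of_forall fun l => sq_nonneg _) hb hg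
    have h2 : Tendsto (fun l => |f l - v|) (nhdsWithin 0 (Set.Ioi 0)) (nhds 0) := by
      have h3 := (Real.continuous_sqrt.tendsto 0).comp h1
      simp only [Function.comp_def, Real.sqrt_sq_eq_abs, Real.sqrt_zero] at h3
      exact h3
    have h4 : Tendsto (fun l => f l - v) (nhdsWithin 0 (Set.Ioi 0)) (nhds 0) :=
      (tendsto_zero_iff_abs_tendsto_zero _).mpr h2
    have h5 := h4.add_const v
    simpa using h5
  exact ⟨habs vp 1200 (by norm_num) (fun l hl => (key l hl).1),
         habs vm 5000 (by norm_num) (fun l hl => (key l hl).2)⟩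
end

section
/- In the 2×2 discounted game with value equation arising from the Bewley–Kohlberg example, the optimal probability x_λ of playing Quit in state ω₊ satisfies x_λ(ω₊) ~ √λ/√p₊* as λ → 0 (i.e., the ratio x_λ(ω₊)·√p₊*/√λ tends to 1). -/
open Real Set Filter Topology


lemma combo_le {u v w B x y : ℝ} (hx0 : 0 ≤ x) (hx1 : x ≤ 1) (hy0 : 0 ≤ y) (hy1 : y ≤ 1)
    (hu : u ≤ B) (hv : v ≤ B) (hw : w ≤ B) :
    (1-x)*(1-y)*u + (x*(1-y)+y*(1-x))*v + x*y*w ≤ B := by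
  nlinarith [mul_nonneg (mul_nonneg (by linarith : (0:ℝ) ≤ 1-x) (by linarith : (0:ℝ) ≤ 1-y)) (by linarith : 0 ≤ B - u),
    mul_nonneg (mul_nonneg hx0 (by linarith : (0:ℝ) ≤ 1-y)) (by linarith : 0 ≤ B - v),
    mul_nonneg (mul_nonneg hy0 (by linarith : (0:ℝ) ≤ 1-x)) (by linarith : 0 ≤ B - v),
    mul_nonneg (mul_nonneg hx0 hy0) (by linarith : 0 ≤ B - w)]

lemma combo_ge {u v w B x y : ℝ} (hx0 : 0 ≤ x) (hx1 : x ≤ 1) (hy0 : 0 ≤ y) (hy1 : y ≤ 1)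
    (hu : -B ≤ u) (hv : -B ≤ v) (hw : -B ≤ w) :
    -B ≤ (1-x)*(1-y)*u + (x*(1-y)+y*(1-x))*v + x*y*w := by
  nlinarith [mul_nonneg (mul_nonneg (by linarith : (0:ℝ) ≤ 1-x) (by linarith : (0:ℝ) ≤ 1-y)) (by linarith : 0 ≤ u + B),
    mul_nonneg (mul_nonneg hx0 (by linarith : (0:ℝ) ≤ 1-y)) (by linarith : 0 ≤ v + B),
    mul_nonneg (mul_nonneg hy0 (by linarith : (0:ℝ) ≤ 1-x)) (by linarith : 0 ≤ v + B),
    mul_nonneg (mul_nonneg hx0 hy0) (by linarith : 0 ≤ w + B)]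

noncomputable instance : Nonempty (Set.Icc (0:ℝ) 1) := ⟨⟨0, by norm_num⟩⟩

lemma bddAbove_of_le {f : (Set.Icc (0:ℝ) 1) → ℝ} {B : ℝ} (h : ∀ x, f x ≤ B) :
    BddAbove (Set.range f) := ⟨B, by rintro _ ⟨x, rfl⟩; exact h x⟩

lemma bddBelow_of_ge {f : (Set.Icc (0:ℝ) 1) → ℝ} {B : ℝ} (h : ∀ x, B ≤ f x) :
    BddBelow (Set.range f) := ⟨B, by rintro _ ⟨x, rfl⟩; exact h x⟩

/-- abstract minimax sandwich: if Φ is bounded on the square by B in abs,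
value v satisfies inf-sup and sup-inf representations, then
(1) v ≤ ⨆ x, Φ x y₀ for every y₀, (2) v ≥ ⨅ y, Φ x₀ y for every x₀. -/
lemma value_le_sup {Φ : ℝ → ℝ → ℝ} {v B : ℝ}
    (hB : ∀ x ∈ Set.Icc (0:ℝ) 1, ∀ y ∈ Set.Icc (0:ℝ) 1, -B ≤ Φ x y ∧ Φ x y ≤ B)
    (hv : v = ⨅ y : Set.Icc (0:ℝ) 1, ⨆ x : Set.Icc (0:ℝ) 1, Φ x y)
    (y₀ : Set.Icc (0:ℝ) 1) : v ≤ ⨆ x : Set.Icc (0:ℝ) 1, Φ x y₀ := by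
  rw [hv]
  apply ciInf_le
  apply bddBelow_of_ge (B := -B)
  intro y
  calc -B ≤ Φ 0 y := (hB 0 (by norm_num) y y.2).1
  _ ≤ ⨆ x : Set.Icc (0:ℝ) 1, Φ x y :=
      le_ciSup (bddAbove_of_le (fun x => (hB x x.2 y y.2).2)) ⟨0, by norm_num⟩

lemma inf_le_value {Φ : ℝ → ℝ → ℝ} {v B : ℝ}
    (hB : ∀ x ∈ Set.Icc (0:ℝ) 1, ∀ y ∈ Set.Icc (0:ℝ) 1, -B ≤ Φ x y ∧ Φ x y ≤ B)
    (hv : v = ⨆ x : Set.Icc (0:ℝ) 1, ⨅ y : Set.Icc (0:ℝ) 1, Φ x y)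
    (x₀ : Set.Icc (0:ℝ) 1) : (⨅ y : Set.Icc (0:ℝ) 1, Φ x₀ y) ≤ v := by
  rw [hv]
  apply le_ciSup (f := fun x : Set.Icc (0:ℝ) 1 => ⨅ y : Set.Icc (0:ℝ) 1, Φ x y)
  apply bddAbove_of_le (B := B)
  intro x
  calc (⨅ y : Set.Icc (0:ℝ) 1, Φ x y) ≤ Φ x 0 :=
        ciInf_le (bddBelow_of_ge (fun y => (hB x x.2 y y.2).1)) ⟨0, by norm_num⟩
  _ ≤ B := (hB x x.2 0 (by norm_num)).2

lemma value_le_of_const {Φ : ℝ → ℝ → ℝ} {v B c : ℝ}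
    (hB : ∀ x ∈ Set.Icc (0:ℝ) 1, ∀ y ∈ Set.Icc (0:ℝ) 1, -B ≤ Φ x y ∧ Φ x y ≤ B)
    (hv : v = ⨅ y : Set.Icc (0:ℝ) 1, ⨆ x : Set.Icc (0:ℝ) 1, Φ x y)
    (y₀ : Set.Icc (0:ℝ) 1) (hc : ∀ x : Set.Icc (0:ℝ) 1, Φ x y₀ = c) : v ≤ c := by
  have h1 := value_le_sup hB hv y₀
  have h2 : (⨆ x : Set.Icc (0:ℝ) 1, Φ x y₀) = c := by
    have h3 : (⨆ x : Set.Icc (0:ℝ) 1, Φ x y₀) = ⨆ _x : Set.Icc (0:ℝ) 1, c := by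
      congr 1; funext x; exact hc x
    rw [h3, ciSup_const]
  linarith

lemma value_ge_of_const {Φ : ℝ → ℝ → ℝ} {v B c : ℝ}
    (hB : ∀ x ∈ Set.Icc (0:ℝ) 1, ∀ y ∈ Set.Icc (0:ℝ) 1, -B ≤ Φ x y ∧ Φ x y ≤ B)
    (hv : v = ⨆ x : Set.Icc (0:ℝ) 1, ⨅ y : Set.Icc (0:ℝ) 1, Φ x y)
    (x₀ : Set.Icc (0:ℝ) 1) (hc : ∀ y : Set.Icc (0:ℝ) 1, Φ x₀ y = c) : c ≤ v := by
  have h1 := inf_le_value hB hv x₀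
  have h2 : (⨅ y : Set.Icc (0:ℝ) 1, Φ x₀ y) = c := by
    have h3 : (⨅ y : Set.Icc (0:ℝ) 1, Φ x₀ y) = ⨅ _y : Set.Icc (0:ℝ) 1, c := by
      congr 1; funext y; exact hc y
    rw [h3, ciInf_const]
  linarith

lemma value_le_of_le {Φ : ℝ → ℝ → ℝ} {v B c : ℝ}
    (hB : ∀ x ∈ Set.Icc (0:ℝ) 1, ∀ y ∈ Set.Icc (0:ℝ) 1, -B ≤ Φ x y ∧ Φ x y ≤ B)
    (hv : v = ⨅ y : Set.Icc (0:ℝ) 1, ⨆ x : Set.Icc (0:ℝ) 1, Φ x y)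
    (y₀ : Set.Icc (0:ℝ) 1) (hc : ∀ x : Set.Icc (0:ℝ) 1, Φ x y₀ ≤ c) : v ≤ c :=
  le_trans (value_le_sup hB hv y₀) (ciSup_le hc)

lemma value_ge_of_ge {Φ : ℝ → ℝ → ℝ} {v B c : ℝ}
    (hB : ∀ x ∈ Set.Icc (0:ℝ) 1, ∀ y ∈ Set.Icc (0:ℝ) 1, -B ≤ Φ x y ∧ Φ x y ≤ B)
    (hv : v = ⨆ x : Set.Icc (0:ℝ) 1, ⨅ y : Set.Icc (0:ℝ) 1, Φ x y)
    (x₀ : Set.Icc (0:ℝ) 1) (hc : ∀ y : Set.Icc (0:ℝ) 1, c ≤ Φ x₀ y) : c ≤ v :=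
  le_trans (le_ciInf hc) (inf_le_value hB hv x₀)

set_option maxHeartbeats 2000000 in
lemma core (pp pm : ℝ) (hpp : pp ∈ Set.Ioc (0:ℝ) 1) (hpm : pm ∈ Set.Ioc (0:ℝ) 1)
    (vp vm : ℝ → ℝ) (Φp Φm : ℝ → ℝ → ℝ → ℝ)
    (hΦp : ∀ lam x y : ℝ, Φp lam x y =
      lam * 1 + (1 - lam) * ((1 - x) * (1 - y) * vp lam
        + (x * (1 - y) + y * (1 - x)) * vm lam
        + x * y * (pp * 1 + (1 - pp) * vp lam)))
    (hΦm : ∀ lam x y : ℝ, Φm lam x y =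
      lam * (-1) + (1 - lam) * ((1 - x) * (1 - y) * vm lam
        + (x * (1 - y) + y * (1 - x)) * vp lam
        + x * y * (pm * (-1) + (1 - pm) * vm lam)))
    (hvp₁ : ∀ lam ∈ Set.Ioc (0:ℝ) 1,
      vp lam = ⨅ y : Set.Icc (0:ℝ) 1, ⨆ x : Set.Icc (0:ℝ) 1, Φp lam x y)
    (hvp₂ : ∀ lam ∈ Set.Ioc (0:ℝ) 1,
      vp lam = ⨆ x : Set.Icc (0:ℝ) 1, ⨅ y : Set.Icc (0:ℝ) 1, Φp lam x y)
    (hvm₁ : ∀ lam ∈ Set.Ioc (0:ℝ) 1,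
      vm lam = ⨅ y : Set.Icc (0:ℝ) 1, ⨆ x : Set.Icc (0:ℝ) 1, Φm lam x y)
    (hvm₂ : ∀ lam ∈ Set.Ioc (0:ℝ) 1,
      vm lam = ⨆ x : Set.Icc (0:ℝ) 1, ⨅ y : Set.Icc (0:ℝ) 1, Φm lam x y)
    (lam : ℝ) (hlam : lam ∈ Set.Ioc (0:ℝ) 1) :
    (-1 ≤ vm lam ∧ vp lam ≤ 1) ∧ lam ≤ vp lam - vm lam ∧
    lam * (1 - vp lam) * (pp * (1 - vp lam) + 2*(vp lam - vm lam))
      = (1 - lam) * (vp lam - vm lam)^2 ∧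
    lam * (1 + vm lam) * (pm * (1 + vm lam) + 2*(vp lam - vm lam))
      = (1 - lam) * (vp lam - vm lam)^2 := by
  obtain ⟨hl0, hl1⟩ := hlam
  obtain ⟨hpp0, hpp1⟩ := hpp
  obtain ⟨hpm0, hpm1⟩ := hpm
  set a := vp lam with ha
  set b := vm lam with hb
  have hPf : ∀ x y : ℝ, Φp lam x y
      = lam + (1-lam)*((1-x)*(1-y)*a + (x*(1-y)+y*(1-x))*b + x*y*(pp + (1-pp)*a)) := by
    intro x y; rw [hΦp]; ring
  have hMf : ∀ x y : ℝ, Φm lam x y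
      = -lam + (1-lam)*((1-x)*(1-y)*b + (x*(1-y)+y*(1-x))*a + x*y*(-pm + (1-pm)*b)) := by
    intro x y; rw [hΦm]; ring
  -- parametric bound
  have hbound : ∀ N : ℝ, 1 ≤ N → |a| ≤ N → |b| ≤ N →
      ∀ x ∈ Set.Icc (0:ℝ) 1, ∀ y ∈ Set.Icc (0:ℝ) 1,
        (-(lam + (1-lam)*N) ≤ Φp lam x y ∧ Φp lam x y ≤ lam + (1-lam)*N) ∧
        (-(lam + (1-lam)*N) ≤ Φm lam x y ∧ Φm lam x y ≤ lam + (1-lam)*N) := by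
    intro N hN haN hbN x hx y hy
    obtain ⟨haN1, haN2⟩ := abs_le.1 haN
    obtain ⟨hbN1, hbN2⟩ := abs_le.1 hbN
    have hwp1 : pp + (1-pp)*a ≤ N := by nlinarith [mul_nonneg (by linarith : (0:ℝ) ≤ 1-pp) (by linarith : 0 ≤ N - a)]
    have hwp2 : -N ≤ pp + (1-pp)*a := by nlinarith [mul_nonneg (by linarith : (0:ℝ) ≤ 1-pp) (by linarith : 0 ≤ a + N)]
    have hwm1 : -pm + (1-pm)*b ≤ N := by nlinarith [mul_nonneg (by linarith : (0:ℝ) ≤ 1-pm) (by linarith : 0 ≤ N - b)]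
    have hwm2 : -N ≤ -pm + (1-pm)*b := by nlinarith [mul_nonneg (by linarith : (0:ℝ) ≤ 1-pm) (by linarith : 0 ≤ b + N)]
    have h1l : (0:ℝ) ≤ 1 - lam := by linarith
    have cpu := combo_le hx.1 hx.2 hy.1 hy.2 haN2 hbN2 hwp1
    have cpl := combo_ge hx.1 hx.2 hy.1 hy.2 haN1 hbN1 hwp2
    have cmu := combo_le hx.1 hx.2 hy.1 hy.2 hbN2 haN2 hwm1
    have cml := combo_ge hx.1 hx.2 hy.1 hy.2 hbN1 haN1 hwm2
    refine ⟨⟨?_, ?_⟩, ?_, ?_⟩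
    · rw [hPf]; nlinarith [mul_nonneg h1l (by linarith :
        0 ≤ (1-x)*(1-y)*a + (x*(1-y)+y*(1-x))*b + x*y*(pp + (1-pp)*a) + N)]
    · rw [hPf]; nlinarith [mul_nonneg h1l (by linarith :
        0 ≤ N - ((1-x)*(1-y)*a + (x*(1-y)+y*(1-x))*b + x*y*(pp + (1-pp)*a)))]
    · rw [hMf]; nlinarith [mul_nonneg h1l (by linarith :
        0 ≤ (1-x)*(1-y)*b + (x*(1-y)+y*(1-x))*a + x*y*(-pm + (1-pm)*b) + N)]
    · rw [hMf]; nlinarith [mul_nonneg h1l (by linarith :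
        0 ≤ N - ((1-x)*(1-y)*b + (x*(1-y)+y*(1-x))*a + x*y*(-pm + (1-pm)*b)))]
  -- bounds |a| ≤ 1, |b| ≤ 1
  have habs : |a| ≤ 1 ∧ |b| ≤ 1 := by
    set N : ℝ := max 1 (max |a| |b|) with hNdef
    have hN1 : (1:ℝ) ≤ N := le_max_left _ _
    have haN : |a| ≤ N := le_trans (le_max_left _ _) (le_max_right _ _)
    have hbN : |b| ≤ N := le_trans (le_max_right _ _) (le_max_right _ _)
    have hb' := hbound N hN1 haN hbN
    have hBp : ∀ x ∈ Set.Icc (0:ℝ) 1, ∀ y ∈ Set.Icc (0:ℝ) 1,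
        -(lam + (1-lam)*N) ≤ Φp lam x y ∧ Φp lam x y ≤ lam + (1-lam)*N :=
      fun x hx y hy => (hb' x hx y hy).1
    have hBm : ∀ x ∈ Set.Icc (0:ℝ) 1, ∀ y ∈ Set.Icc (0:ℝ) 1,
        -(lam + (1-lam)*N) ≤ Φm lam x y ∧ Φm lam x y ≤ lam + (1-lam)*N :=
      fun x hx y hy => (hb' x hx y hy).2
    have ha_ub : a ≤ lam + (1-lam)*N :=
      value_le_of_le hBp (hvp₁ lam ⟨hl0, hl1⟩) ⟨0, by norm_num⟩
        (fun x => (hBp x x.2 0 (by norm_num)).2)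
    have ha_lb : -(lam + (1-lam)*N) ≤ a :=
      value_ge_of_ge hBp (hvp₂ lam ⟨hl0, hl1⟩) ⟨0, by norm_num⟩
        (fun y => (hBp 0 (by norm_num) y y.2).1)
    have hb_ub : b ≤ lam + (1-lam)*N :=
      value_le_of_le hBm (hvm₁ lam ⟨hl0, hl1⟩) ⟨0, by norm_num⟩
        (fun x => (hBm x x.2 0 (by norm_num)).2)
    have hb_lb : -(lam + (1-lam)*N) ≤ b :=
      value_ge_of_ge hBm (hvm₂ lam ⟨hl0, hl1⟩) ⟨0, by norm_num⟩
        (fun y => (hBm 0 (by norm_num) y y.2).1)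
    rcases le_or_gt (max |a| |b|) 1 with h | h
    · exact ⟨le_trans (le_max_left _ _) h, le_trans (le_max_right _ _) h⟩
    · exfalso
      have hNM : N = max |a| |b| := max_eq_right h.le
      have hM_ub : max |a| |b| ≤ lam + (1-lam)*N := by
        apply max_le
        · exact abs_le.2 ⟨by linarith, ha_ub⟩
        · exact abs_le.2 ⟨by linarith, hb_ub⟩
      rw [← hNM] at hM_ub h
      nlinarith [mul_pos hl0 (by linarith : (0:ℝ) < N - 1)]
  obtain ⟨habs_a, habs_b⟩ := habs
  obtain ⟨ha_lb, ha_ub⟩ := abs_le.1 habs_a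
  obtain ⟨hb_lb, hb_ub⟩ := abs_le.1 habs_b
  -- bound with N = 1
  have hb1 := hbound 1 le_rfl habs_a habs_b
  have hone : lam + (1-lam)*1 = 1 := by ring
  have hBp : ∀ x ∈ Set.Icc (0:ℝ) 1, ∀ y ∈ Set.Icc (0:ℝ) 1,
      -(1:ℝ) ≤ Φp lam x y ∧ Φp lam x y ≤ 1 := by
    intro x hx y hy; have := (hb1 x hx y hy).1; rw [hone] at this; exact this
  have hBm : ∀ x ∈ Set.Icc (0:ℝ) 1, ∀ y ∈ Set.Icc (0:ℝ) 1,
      -(1:ℝ) ≤ Φm lam x y ∧ Φm lam x y ≤ 1 := by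
    intro x hx y hy; have := (hb1 x hx y hy).2; rw [hone] at this; exact this
  -- b ≤ a
  have hba : b ≤ a := by
    by_contra hab
    push_neg at hab
    have h1 : lam + (1-lam)*a ≤ a := by
      apply value_ge_of_ge hBp (hvp₂ lam ⟨hl0, hl1⟩) ⟨0, by norm_num⟩
      intro y
      show lam + (1-lam)*a ≤ Φp lam 0 (y:ℝ)
      obtain ⟨hy1, hy2⟩ := y.2
      rw [hPf]
      nlinarith [mul_nonneg hy1 (by linarith : 0 ≤ b - a),
        mul_nonneg (by linarith : (0:ℝ) ≤ 1 - lam) (mul_nonneg hy1 (by linarith : 0 ≤ b - a))]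
    nlinarith
  -- a ≥ lam + (1-lam) b
  have hA : lam + (1-lam)*b ≤ a := by
    apply value_ge_of_ge hBp (hvp₂ lam ⟨hl0, hl1⟩) ⟨0, by norm_num⟩
    intro y
    show lam + (1-lam)*b ≤ Φp lam 0 (y:ℝ)
    obtain ⟨hy1, hy2⟩ := y.2
    rw [hPf]
    nlinarith [mul_nonneg (by linarith : (0:ℝ) ≤ 1 - lam)
      (mul_nonneg (by linarith : (0:ℝ) ≤ 1 - (y:ℝ)) (by linarith : 0 ≤ a - b))]
  -- b ≤ -lam + (1-lam) a
  have hB2 : b ≤ -lam + (1-lam)*a := by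
    apply value_le_of_le hBm (hvm₁ lam ⟨hl0, hl1⟩) ⟨0, by norm_num⟩
    intro x
    show Φm lam (x:ℝ) 0 ≤ -lam + (1-lam)*a
    obtain ⟨hx1, hx2⟩ := x.2
    rw [hMf]
    nlinarith [mul_nonneg (by linarith : (0:ℝ) ≤ 1 - lam)
      (mul_nonneg (by linarith : (0:ℝ) ≤ 1 - (x:ℝ)) (by linarith : 0 ≤ a - b))]
  have hD : lam ≤ a - b := by nlinarith
  refine ⟨⟨hb_lb, ha_ub⟩, hD, ?_, ?_⟩
  · -- E+
    have hD0' : 0 < a - b := lt_of_lt_of_le hl0 hD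
    have hC0 : 0 < pp*(1-a) + 2*(a-b) := by
      nlinarith [mul_nonneg hpp0.le (by linarith : 0 ≤ 1 - a)]
    set q : ℝ := (a-b) / (pp*(1-a)+2*(a-b)) with hqdef
    have hq : q * (pp*(1-a)+2*(a-b)) = a - b := div_mul_cancel₀ _ hC0.ne'
    have hq0 : 0 ≤ q := div_nonneg hD0'.le hC0.le
    have hq1 : q ≤ 1 := by
      rw [hqdef, div_le_one hC0]
      nlinarith [mul_nonneg hpp0.le (by linarith : 0 ≤ 1 - a)]
    have hconst1 : ∀ x : Set.Icc (0:ℝ) 1, Φp lam x (⟨q, hq0, hq1⟩ : Set.Icc (0:ℝ) 1)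
        = lam + (1-lam)*(a - q*(a-b)) := by
      intro x
      show Φp lam x q = _
      rw [hPf]
      linear_combination (1-lam) * (x:ℝ) * hq
    have hconst2 : ∀ y : Set.Icc (0:ℝ) 1, Φp lam (⟨q, hq0, hq1⟩ : Set.Icc (0:ℝ) 1) y
        = lam + (1-lam)*(a - q*(a-b)) := by
      intro y
      show Φp lam q y = _
      rw [hPf]
      linear_combination (1-lam) * (y:ℝ) * hq
    have e1 : a ≤ lam + (1-lam)*(a - q*(a-b)) :=
      value_le_of_const hBp (hvp₁ lam ⟨hl0, hl1⟩) _ hconst1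
    have e2 : lam + (1-lam)*(a - q*(a-b)) ≤ a :=
      value_ge_of_const hBp (hvp₂ lam ⟨hl0, hl1⟩) _ hconst2
    have e3 : a = lam + (1-lam)*(a - q*(a-b)) := le_antisymm e1 e2
    show lam * (1 - a) * (pp * (1 - a) + 2*(a-b)) = (1 - lam) * (a-b)^2
    linear_combination -(pp*(1-a)+2*(a-b)) * e3 + (1-lam)*(a-b)*hq
  · -- E-
    have hD0' : 0 < a - b := lt_of_lt_of_le hl0 hD
    have hC0 : 0 < pm*(1+b) + 2*(a-b) := by
      nlinarith [mul_nonneg hpm0.le (by linarith : 0 ≤ 1 + b)]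
    set q : ℝ := (a-b) / (pm*(1+b)+2*(a-b)) with hqdef
    have hq : q * (pm*(1+b)+2*(a-b)) = a - b := div_mul_cancel₀ _ hC0.ne'
    have hq0 : 0 ≤ q := div_nonneg hD0'.le hC0.le
    have hq1 : q ≤ 1 := by
      rw [hqdef, div_le_one hC0]
      nlinarith [mul_nonneg hpm0.le (by linarith : 0 ≤ 1 + b)]
    have hconst1 : ∀ x : Set.Icc (0:ℝ) 1, Φm lam x (⟨q, hq0, hq1⟩ : Set.Icc (0:ℝ) 1)
        = -lam + (1-lam)*(b + q*(a-b)) := by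
      intro x
      show Φm lam x q = _
      rw [hMf]
      linear_combination -((1-lam) * (x:ℝ)) * hq
    have hconst2 : ∀ y : Set.Icc (0:ℝ) 1, Φm lam (⟨q, hq0, hq1⟩ : Set.Icc (0:ℝ) 1) y
        = -lam + (1-lam)*(b + q*(a-b)) := by
      intro y
      show Φm lam q y = _
      rw [hMf]
      linear_combination -((1-lam) * (y:ℝ)) * hq
    have e1 : b ≤ -lam + (1-lam)*(b + q*(a-b)) :=
      value_le_of_const hBm (hvm₁ lam ⟨hl0, hl1⟩) _ hconst1
    have e2 : -lam + (1-lam)*(b + q*(a-b)) ≤ b :=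
      value_ge_of_const hBm (hvm₂ lam ⟨hl0, hl1⟩) _ hconst2
    have e3 : b = -lam + (1-lam)*(b + q*(a-b)) := le_antisymm e1 e2
    show lam * (1 + b) * (pm * (1 + b) + 2*(a-b)) = (1 - lam) * (a-b)^2
    linear_combination (pm*(1+b)+2*(a-b)) * e3 + (1-lam)*(a-b)*hq

set_option maxHeartbeats 1000000 in
lemma xchar (pp pm : ℝ) (hpp : pp ∈ Set.Ioc (0:ℝ) 1) (hpm : pm ∈ Set.Ioc (0:ℝ) 1)
    (vp vm : ℝ → ℝ) (Φp Φm : ℝ → ℝ → ℝ → ℝ)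
    (hΦp : ∀ lam x y : ℝ, Φp lam x y =
      lam * 1 + (1 - lam) * ((1 - x) * (1 - y) * vp lam
        + (x * (1 - y) + y * (1 - x)) * vm lam
        + x * y * (pp * 1 + (1 - pp) * vp lam)))
    (hΦm : ∀ lam x y : ℝ, Φm lam x y =
      lam * (-1) + (1 - lam) * ((1 - x) * (1 - y) * vm lam
        + (x * (1 - y) + y * (1 - x)) * vp lam
        + x * y * (pm * (-1) + (1 - pm) * vm lam)))
    (hvp₁ : ∀ lam ∈ Set.Ioc (0:ℝ) 1,
      vp lam = ⨅ y : Set.Icc (0:ℝ) 1, ⨆ x : Set.Icc (0:ℝ) 1, Φp lam x y)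
    (hvp₂ : ∀ lam ∈ Set.Ioc (0:ℝ) 1,
      vp lam = ⨆ x : Set.Icc (0:ℝ) 1, ⨅ y : Set.Icc (0:ℝ) 1, Φp lam x y)
    (hvm₁ : ∀ lam ∈ Set.Ioc (0:ℝ) 1,
      vm lam = ⨅ y : Set.Icc (0:ℝ) 1, ⨆ x : Set.Icc (0:ℝ) 1, Φm lam x y)
    (hvm₂ : ∀ lam ∈ Set.Ioc (0:ℝ) 1,
      vm lam = ⨆ x : Set.Icc (0:ℝ) 1, ⨅ y : Set.Icc (0:ℝ) 1, Φm lam x y)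
    (xlam : ℝ → ℝ)
    (hxmem : ∀ lam ∈ Set.Ioc (0:ℝ) 1, xlam lam ∈ Set.Icc (0:ℝ) 1)
    (hxopt : ∀ lam ∈ Set.Ioc (0:ℝ) 1, ∀ y ∈ Set.Icc (0:ℝ) 1,
      vp lam ≤ Φp lam (xlam lam) y)
    (lam : ℝ) (hlam : lam ∈ Set.Ioo (0:ℝ) 1) :
    xlam lam * (pp * (1 - vp lam) + 2*(vp lam - vm lam)) = vp lam - vm lam := by
  obtain ⟨hl0, hl1⟩ := hlam
  have hmem : lam ∈ Set.Ioc (0:ℝ) 1 := ⟨hl0, hl1.le⟩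
  obtain ⟨⟨hb_lb, ha_ub⟩, hD, hEp, _⟩ :=
    core pp pm hpp hpm vp vm Φp Φm hΦp hΦm hvp₁ hvp₂ hvm₁ hvm₂ lam hmem
  obtain ⟨hpp0, hpp1⟩ := hpp
  set a := vp lam with ha
  set b := vm lam with hb
  set x := xlam lam with hxd
  obtain ⟨hx0, hx1⟩ := hxmem lam hmem
  have hD0' : 0 < a - b := lt_of_lt_of_le hl0 hD
  have hC0 : 0 < pp*(1-a) + 2*(a-b) := by
    nlinarith [mul_nonneg hpp0.le (by linarith : 0 ≤ 1 - a)]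
  have hCD : 0 < (pp*(1-a) + 2*(a-b)) - (a-b) := by
    nlinarith [mul_nonneg hpp0.le (by linarith : 0 ≤ 1 - a)]
  -- vs y = 0
  have h0 : a ≤ Φp lam x 0 := hxopt lam hmem 0 (by norm_num)
  have e0 : Φp lam x 0 = lam + a - lam*a - (1-lam)*(x*(a-b)) := by rw [hΦp]; ring
  rw [e0] at h0
  -- vs y = 1
  have h1 : a ≤ Φp lam x 1 := hxopt lam hmem 1 (by norm_num)
  have e1 : Φp lam x 1 = lam + b - lam*b + (1-lam)*(x*(pp*(1-a)+(a-b))) := by rw [hΦp]; ring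
  rw [e1] at h1
  have hEp' : lam * (1-a) * (pp*(1-a)+2*(a-b)) = (1-lam)*(a-b)^2 := hEp
  have k1 : (1-lam)*(a-b)*(x*(pp*(1-a)+2*(a-b)) - (a-b)) ≤ 0 := by
    nlinarith [mul_le_mul_of_nonneg_right
      (by linarith : (1-lam)*(x*(a-b)) ≤ lam - lam*a) hC0.le]
  have k2 : 0 ≤ (1-lam)*((pp*(1-a)+2*(a-b)) - (a-b))*(x*(pp*(1-a)+2*(a-b)) - (a-b)) := by
    nlinarith [mul_le_mul_of_nonneg_right
      (by linarith : a - lam - b + lam*b ≤ (1-lam)*(x*(pp*(1-a)+(a-b)))) hC0.le]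
  have hle : x*(pp*(1-a)+2*(a-b)) ≤ a - b := by
    by_contra hcon
    push_neg at hcon
    nlinarith [mul_pos (mul_pos (by linarith : (0:ℝ) < 1 - lam) hD0')
      (by linarith : (0:ℝ) < x*(pp*(1-a)+2*(a-b)) - (a-b))]
  have hge : a - b ≤ x*(pp*(1-a)+2*(a-b)) := by
    by_contra hcon
    push_neg at hcon
    nlinarith [mul_pos (mul_pos (by linarith : (0:ℝ) < 1 - lam) hCD)
      (by linarith : (0:ℝ) < (a-b) - x*(pp*(1-a)+2*(a-b)))]
  linarith


set_option maxHeartbeats 2000000 in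
theorem stmt_18 (pp pm : ℝ) (hpp : pp ∈ Set.Ioc (0:ℝ) 1) (hpm : pm ∈ Set.Ioc (0:ℝ) 1)
    (vp vm : ℝ → ℝ)
    (Φp Φm : ℝ → ℝ → ℝ → ℝ)
    (hΦp : ∀ lam x y : ℝ, Φp lam x y =
      lam * 1 + (1 - lam) * ((1 - x) * (1 - y) * vp lam
        + (x * (1 - y) + y * (1 - x)) * vm lam
        + x * y * (pp * 1 + (1 - pp) * vp lam)))
    (hΦm : ∀ lam x y : ℝ, Φm lam x y =
      lam * (-1) + (1 - lam) * ((1 - x) * (1 - y) * vm lam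
        + (x * (1 - y) + y * (1 - x)) * vp lam
        + x * y * (pm * (-1) + (1 - pm) * vm lam)))
    (hvp₁ : ∀ lam ∈ Set.Ioc (0:ℝ) 1,
      vp lam = ⨅ y : Set.Icc (0:ℝ) 1, ⨆ x : Set.Icc (0:ℝ) 1, Φp lam x y)
    (hvp₂ : ∀ lam ∈ Set.Ioc (0:ℝ) 1,
      vp lam = ⨆ x : Set.Icc (0:ℝ) 1, ⨅ y : Set.Icc (0:ℝ) 1, Φp lam x y)
    (hvm₁ : ∀ lam ∈ Set.Ioc (0:ℝ) 1,
      vm lam = ⨅ y : Set.Icc (0:ℝ) 1, ⨆ x : Set.Icc (0:ℝ) 1, Φm lam x y)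
    (hvm₂ : ∀ lam ∈ Set.Ioc (0:ℝ) 1,
      vm lam = ⨆ x : Set.Icc (0:ℝ) 1, ⨅ y : Set.Icc (0:ℝ) 1, Φm lam x y)
    (xlam : ℝ → ℝ)
    (hxmem : ∀ lam ∈ Set.Ioc (0:ℝ) 1, xlam lam ∈ Set.Icc (0:ℝ) 1)
    (hxopt : ∀ lam ∈ Set.Ioc (0:ℝ) 1, ∀ y ∈ Set.Icc (0:ℝ) 1,
      vp lam ≤ Φp lam (xlam lam) y) :
    Filter.Tendsto (fun lam : ℝ => xlam lam * Real.sqrt pp / Real.sqrt lam)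
      (nhdsWithin 0 (Set.Ioi 0)) (nhds 1) := by
  obtain ⟨hpp0, hpp1⟩ := hpp
  obtain ⟨hpm0, hpm1⟩ := hpm
  set c0 : ℝ := min (1/2) (Real.sqrt (pm/pp)) with hc0def
  have hc00 : 0 < c0 := lt_min (by norm_num) (Real.sqrt_pos.2 (by positivity))
  have hc0half : c0 ≤ 1/2 := min_le_left _ _
  set K : ℝ := 10/(pp*c0) with hKdef
  have hK0 : 0 < K := by positivity
  have hK10 : pp*c0*K = 10 := by
    rw [hKdef]; field_simp
  -- squeeze bounds
  have hlo : Filter.Tendsto (fun lam : ℝ => Real.sqrt (1/(1+K*Real.sqrt lam)))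
      (nhdsWithin 0 (Set.Ioi 0)) (nhds 1) := by
    have t0 : Filter.Tendsto (fun lam : ℝ => Real.sqrt lam)
        (nhdsWithin 0 (Set.Ioi 0)) (nhds 0) :=
      (Real.continuous_sqrt.tendsto' 0 0 Real.sqrt_zero).mono_left nhdsWithin_le_nhds
    have t1 : Filter.Tendsto (fun lam : ℝ => 1+K*Real.sqrt lam)
        (nhdsWithin 0 (Set.Ioi 0)) (nhds 1) := by
      have h := (t0.const_mul K).const_add (1:ℝ)
      simpa using h
    have t2 : Filter.Tendsto (fun lam : ℝ => 1/(1+K*Real.sqrt lam))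
        (nhdsWithin 0 (Set.Ioi 0)) (nhds 1) := by
      have := t1.inv₀ (by norm_num : (1:ℝ) ≠ 0)
      simpa [one_div] using this
    exact (Real.continuous_sqrt.tendsto' 1 1 (by simp)).comp t2
  have hhi : Filter.Tendsto (fun lam : ℝ => Real.sqrt (1/(1-lam)))
      (nhdsWithin 0 (Set.Ioi 0)) (nhds 1) := by
    have t1 : Filter.Tendsto (fun lam : ℝ => 1-lam)
        (nhdsWithin 0 (Set.Ioi 0)) (nhds 1) := by
      have h : Filter.Tendsto (fun lam : ℝ => 1-lam) (nhds 0) (nhds 1) :=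
        Continuous.tendsto' (by fun_prop) 0 1 (by norm_num)
      exact h.mono_left nhdsWithin_le_nhds
    have t2 : Filter.Tendsto (fun lam : ℝ => 1/(1-lam))
        (nhdsWithin 0 (Set.Ioi 0)) (nhds 1) := by
      have := t1.inv₀ (by norm_num : (1:ℝ) ≠ 0)
      simpa [one_div] using this
    exact (Real.continuous_sqrt.tendsto' 1 1 (by simp)).comp t2
  -- the eventual sandwich
  have hev : ∀ᶠ lam in nhdsWithin (0:ℝ) (Set.Ioi 0),
      Real.sqrt (1/(1+K*Real.sqrt lam)) ≤ xlam lam * Real.sqrt pp / Real.sqrt lam ∧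
      xlam lam * Real.sqrt pp / Real.sqrt lam ≤ Real.sqrt (1/(1-lam)) := by
    filter_upwards [Ioo_mem_nhdsGT_of_mem
      (by constructor <;> norm_num : (0:ℝ) ∈ Set.Ico (0:ℝ) (1/100))] with lam hlam
    obtain ⟨hl0, hl100⟩ := hlam
    have hl1 : lam < 1 := by linarith
    have hmem : lam ∈ Set.Ioc (0:ℝ) 1 := ⟨hl0, hl1.le⟩
    obtain ⟨⟨hb_lb, ha_ub⟩, hD, hEp, hEm⟩ :=
      core pp pm ⟨hpp0, hpp1⟩ ⟨hpm0, hpm1⟩ vp vm Φp Φm hΦp hΦm hvp₁ hvp₂ hvm₁ hvm₂ lam hmem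
    have xeq := xchar pp pm ⟨hpp0, hpp1⟩ ⟨hpm0, hpm1⟩ vp vm Φp Φm hΦp hΦm
      hvp₁ hvp₂ hvm₁ hvm₂ xlam hxmem hxopt lam ⟨hl0, hl1⟩
    set a := vp lam with hadef
    set b := vm lam with hbdef
    set x := xlam lam with hxdef
    set W := Real.sqrt lam with hWdef
    have hW0 : 0 < W := Real.sqrt_pos.2 hl0
    have hW2 : W^2 = lam := Real.sq_sqrt hl0.le
    have hD0' : 0 < a - b := lt_of_lt_of_le hl0 hD
    have hab : -1 ≤ a := by linarith
    have hbb : b ≤ 1 := by linarith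
    have hC0 : 0 < pp*(1-a) + 2*(a-b) := by
      nlinarith [mul_nonneg hpp0.le (by linarith : 0 ≤ 1 - a)]
    -- D ≤ 5 W
    have hDsq : (a-b)^2 ≤ 25*W^2 := by
      have hppa : pp*(1-a) ≤ 2 := by
        nlinarith [mul_nonneg (by linarith : (0:ℝ) ≤ 1-pp) (by linarith : (0:ℝ) ≤ 1-a)]
      have hCle : pp*(1-a)+2*(a-b) ≤ 6 := by linarith
      have hsC : (1-a)*(pp*(1-a)+2*(a-b)) ≤ 12 := by
        nlinarith [mul_nonneg (by linarith : (0:ℝ) ≤ 2 - (1-a)) hC0.le]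
      rw [hW2]
      nlinarith [hEp, mul_le_mul_of_nonneg_left hsC hl0.le,
        mul_le_mul_of_nonneg_right hl100.le (sq_nonneg (a-b))]
    have hD5 : a - b ≤ 5*W := by
      nlinarith [hDsq, hD0', hW0]
    -- W ≤ 1/10 hence D ≤ 1/2
    have hW10 : W ≤ 1/10 := by
      rw [hWdef]
      calc Real.sqrt lam ≤ Real.sqrt (1/100) := Real.sqrt_le_sqrt hl100.le
      _ = 1/10 := by
          rw [show (1:ℝ)/100 = (1/10)^2 by norm_num, Real.sqrt_sq (by norm_num)]
    have hDhalf : a - b ≤ 1/2 := by linarith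
    -- s ≥ c0
    have hsc : c0 ≤ 1 - a := by
      rcases le_or_gt (1/2 : ℝ) (1 - a) with hcase | hcase
      · linarith
      · have ht1 : (1:ℝ) ≤ 1 + b := by linarith
        have hrel : (1-a)*(pp*(1-a)+2*(a-b)) = (1+b)*(pm*(1+b)+2*(a-b)) := by
          have h2 : lam*((1-a)*(pp*(1-a)+2*(a-b)) - (1+b)*(pm*(1+b)+2*(a-b))) = 0 := by
            linear_combination hEp - hEm
          rcases mul_eq_zero.mp h2 with h | h
          · exact absurd h hl0.ne'
          · linarith
        have hppss : pm ≤ pp*(1-a)^2 := by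
          nlinarith [hrel, mul_nonneg (by linarith : (0:ℝ) ≤ 2*(a-b))
            (by linarith : (0:ℝ) ≤ (1+b) - (1-a)),
            mul_nonneg hpm0.le (by nlinarith : (0:ℝ) ≤ (1+b)^2 - 1)]
        have : Real.sqrt (pm/pp) ≤ 1 - a := by
          have h1 : pm/pp ≤ (1-a)^2 := by
            rw [div_le_iff₀ hpp0]; nlinarith
          calc Real.sqrt (pm/pp) ≤ Real.sqrt ((1-a)^2) := Real.sqrt_le_sqrt h1
          _ = 1 - a := Real.sqrt_sq (by linarith)
        exact le_trans (min_le_right _ _) this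
    -- lam*(1-a) = (1-lam)*x^2*C
    have hx2 : lam*(1-a) = (1-lam)*x^2*(pp*(1-a)+2*(a-b)) := by
      have h2 : (lam*(1-a) - (1-lam)*x^2*(pp*(1-a)+2*(a-b))) * (pp*(1-a)+2*(a-b)) = 0 := by
        linear_combination hEp - (1-lam)*((a-b) + x*(pp*(1-a)+2*(a-b)))*xeq
      rcases mul_eq_zero.mp h2 with h | h
      · linarith
      · exact absurd h hC0.ne'
    -- upper bound : x^2*pp*(1-lam) ≤ lam
    have P2 : x^2*pp*(1-lam) ≤ lam := by
      by_contra hcon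
      push_neg at hcon
      nlinarith [mul_lt_mul_of_pos_right hcon hC0, hx2,
        mul_pos hl0 hD0', sq_nonneg x]
    -- lower bound : lam ≤ x^2*pp*(1+K*W)
    have P1 : lam ≤ x^2*pp*(1+K*W) := by
      have key : (1-lam)*(pp*(1-a)+2*(a-b))*(x^2*pp*(1+K*W) - lam)
          = lam*(lam*pp*(1-a) + (1-a)*pp*K*W - 2*(1-lam)*(a-b)) := by
        linear_combination (-(pp*(1+K*W)))*hx2
      have hbr : 0 ≤ lam*pp*(1-a) + (1-a)*pp*K*W - 2*(1-lam)*(a-b) := by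
        nlinarith [mul_nonneg (mul_nonneg (mul_nonneg
            (by linarith : (0:ℝ) ≤ (1-a) - c0) hpp0.le) hK0.le) hW0.le,
          hK10, hD5, mul_nonneg (mul_nonneg hl0.le hpp0.le) (by linarith : (0:ℝ) ≤ 1-a),
          mul_nonneg hl0.le (by linarith : (0:ℝ) ≤ a - b)]
      have hprod : 0 ≤ (1-lam)*(pp*(1-a)+2*(a-b))*(x^2*pp*(1+K*W) - lam) := by
        rw [key]; exact mul_nonneg hl0.le hbr
      by_contra hcon
      push_neg at hcon
      nlinarith [mul_pos (mul_pos (by linarith : (0:ℝ) < 1-lam) hC0)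
        (by linarith : (0:ℝ) < lam - x^2*pp*(1+K*W))]
    -- translate to the quotient
    have hx0 : 0 ≤ x := (hxmem lam hmem).1
    have hR0 : 0 ≤ x * Real.sqrt pp / W := by positivity
    have hRsq : (x * Real.sqrt pp / W)^2 = x^2*pp/lam := by
      rw [div_pow, mul_pow, Real.sq_sqrt hpp0.le, hW2]
    have hKW0 : 0 < 1 + K*W := by positivity
    constructor
    · have hR2lb : 1/(1+K*W) ≤ (x * Real.sqrt pp / W)^2 := by
        rw [hRsq, div_le_div_iff₀ hKW0 hl0]
        linarith
      calc Real.sqrt (1/(1+K*W)) ≤ Real.sqrt ((x * Real.sqrt pp / W)^2) :=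
            Real.sqrt_le_sqrt hR2lb
      _ = x * Real.sqrt pp / W := Real.sqrt_sq hR0
    · have hR2ub : (x * Real.sqrt pp / W)^2 ≤ 1/(1-lam) := by
        rw [hRsq, div_le_div_iff₀ hl0 (by linarith : (0:ℝ) < 1-lam)]
        linarith
      calc x * Real.sqrt pp / W = Real.sqrt ((x * Real.sqrt pp / W)^2) :=
            (Real.sqrt_sq hR0).symm
      _ ≤ Real.sqrt (1/(1-lam)) := Real.sqrt_le_sqrt hR2ub
  exact tendsto_of_tendsto_of_tendsto_of_le_of_le' hlo hhi
    (hev.mono fun lam h => h.1) (hev.mono fun lam h => h.2)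
end

section
/- Let s(x) = sin(ln(−ln x))/16 and suppose a function V : (0,1/16] → ℝ satisfies |V(λ) − s(λ)| ≤ √λ + ε(λ) with ε(λ) → 0 as λ → 0⁺. Then V does not converge as λ → 0⁺; specifically limsup_{λ→0} V(λ) ≥ 1/16 and liminf_{λ→0} V(λ) ≤ −1/16. -/
/-! Along `λₙ = exp (-exp (c + 2πn))` we have `log (-log λₙ) = c + 2πn`, so the oscillating
term `sin (log (-log λ)) / 16` is constantly `sin c / 16`, while the error `√λ + ε λ` tends to `0`.
Hence `V λₙ → sin c / 16`; the choices `c = π/2` and `c = -π/2` give sequences tending to `0⁺`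
along which `V` tends to `1/16` and `-1/16` respectively, so `V` has no limit at `0⁺`. -/

open Real Set Filter Topology

section LimsupAlongSequence

variable {α ι β : Type*} [ConditionallyCompleteLinearOrder β] [TopologicalSpace β]
  [OrderTopology β] {F : Filter α} {l : Filter ι} [l.NeBot] {u : α → β} {x : ι → α} {a : β}

theorem Filter.Tendsto.le_limsup_of_tendsto_comp (hx : Tendsto x l F)
    (hu : F.IsBoundedUnder (· ≤ ·) u) (hux : Tendsto (u ∘ x) l (𝓝 a)) : a ≤ limsup u F :=
  hux.limsup_eq ▸ hx.limsup_comp_le_limsup hux.isBoundedUnder_ge.isCoboundedUnder_le hu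

theorem Filter.Tendsto.liminf_le_of_tendsto_comp (hx : Tendsto x l F)
    (hu : F.IsBoundedUnder (· ≥ ·) u) (hux : Tendsto (u ∘ x) l (𝓝 a)) : liminf u F ≤ a :=
  hux.liminf_eq ▸ hx.liminf_le_liminf_comp hux.isBoundedUnder_le.isCoboundedUnder_ge hu

end LimsupAlongSequence

section TendstoSub

variable {α ι : Type*} {F : Filter α} {f g : α → ℝ}

theorem isBoundedUnder_of_tendsto_sub_of_abs_le {a C : ℝ} (hfg : Tendsto (f - g) F (𝓝 a))
    (hg : ∀ x, |g x| ≤ C) : F.IsBoundedUnder (· ≤ ·) f ∧ F.IsBoundedUnder (· ≥ ·) f := by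
  rw [← sub_add_cancel f g]
  exact ⟨isBoundedUnder_le_add hfg.isBoundedUnder_le
      (isBoundedUnder_of ⟨C, fun x ↦ (abs_le.1 (hg x)).2⟩),
    isBoundedUnder_ge_add hfg.isBoundedUnder_ge
      (isBoundedUnder_of ⟨-C, fun x ↦ (abs_le.1 (hg x)).1⟩)⟩

theorem tendsto_comp_of_tendsto_sub_of_comp_eq {l : Filter ι} {x : ι → α} {b : ℝ}
    (hfg : Tendsto (f - g) F (𝓝 0)) (hx : Tendsto x l F) (hgx : ∀ n, g (x n) = b) :
    Tendsto (f ∘ x) l (𝓝 b) := by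
  have h := (hfg.comp hx).add_const b
  rw [zero_add] at h
  exact h.congr fun n ↦ by simp [hgx]

end TendstoSub

theorem tendsto_exp_neg_exp_add_nat_mul_two_pi (c : ℝ) :
    Tendsto (fun n : ℕ ↦ exp (-exp (c + n * (2 * π)))) atTop (𝓝[>] 0) := by
  have h : Tendsto (fun n : ℕ ↦ c + n * (2 * π)) atTop atTop :=
    tendsto_atTop_add_const_left _ _ <|
      tendsto_natCast_atTop_atTop.atTop_mul_const (by positivity)
  exact tendsto_exp_atBot_nhdsGT.comp (tendsto_neg_atTop_atBot.comp (tendsto_exp_atTop.comp h))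

theorem sin_log_neg_log_exp_neg_exp_add_nat_mul_two_pi (c : ℝ) (n : ℕ) :
    sin (log (-log (exp (-exp (c + n * (2 * π)))))) = sin c := by
  rw [log_exp, neg_neg, log_exp, sin_add_nat_mul_two_pi]

theorem stmt_19 (V ε : ℝ → ℝ)
    (hV : ∀ lam ∈ Set.Ioc (0:ℝ) (1/16),
      |V lam - Real.sin (Real.log (-Real.log lam)) / 16| ≤ Real.sqrt lam + ε lam)
    (hε : Filter.Tendsto ε (nhdsWithin 0 (Set.Ioi 0)) (nhds 0)) :
    (¬ ∃ L : ℝ, Filter.Tendsto V (nhdsWithin 0 (Set.Ioi 0)) (nhds L)) ∧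
    (1/16 : ℝ) ≤ Filter.limsup V (nhdsWithin 0 (Set.Ioi 0)) ∧
    Filter.liminf V (nhdsWithin 0 (Set.Ioi 0)) ≤ -(1/16) := by
  set s : ℝ → ℝ := fun lam ↦ sin (log (-log lam)) / 16
  set x : ℝ → ℕ → ℝ := fun c n ↦ exp (-exp (c + n * (2 * π)))
  have hVs : Tendsto (V - s) (𝓝[>] 0) (𝓝 0) := by
    have hsqrt : Tendsto sqrt (𝓝[>] 0) (𝓝 0) :=
      (continuous_sqrt.tendsto' 0 0 sqrt_zero).mono_left nhdsWithin_le_nhds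
    refine squeeze_zero_norm' ?_ (by simpa using hsqrt.add hε)
    filter_upwards [Ioc_mem_nhdsGT (by norm_num : (0:ℝ) < 1 / 16)] with lam hlam
    exact hV lam hlam
  obtain ⟨hV_le, hV_ge⟩ := isBoundedUnder_of_tendsto_sub_of_abs_le hVs (C := 1 / 16) fun lam ↦ by
    rw [abs_div, abs_of_pos (by norm_num : (0:ℝ) < 16)]
    exact div_le_div_of_nonneg_right (abs_sin_le_one _) (by norm_num)
  have hx (c : ℝ) := tendsto_exp_neg_exp_add_nat_mul_two_pi c
  have hV_seq (c : ℝ) : Tendsto (V ∘ x c) atTop (𝓝 (sin c / 16)) :=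
    tendsto_comp_of_tendsto_sub_of_comp_eq hVs (hx c) fun n ↦ by
      simp only [s, x, sin_log_neg_log_exp_neg_exp_add_nat_mul_two_pi]
  have hV_top := hV_seq (π / 2)
  rw [sin_pi_div_two] at hV_top
  have hV_bot := hV_seq (-(π / 2))
  rw [sin_neg, sin_pi_div_two, neg_div] at hV_bot
  refine ⟨?_, (hx _).le_limsup_of_tendsto_comp hV_le hV_top,
    (hx _).liminf_le_of_tendsto_comp hV_ge hV_bot⟩
  rintro ⟨L, hL⟩
  have h_top := tendsto_nhds_unique (hL.comp (hx _)) hV_top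
  have h_bot := tendsto_nhds_unique (hL.comp (hx _)) hV_bot
  linarith
end
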